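/- arXiv:1902.09837 — 8 statements merged into one kernel-verified Lean document; each statement's English description precedes it below -/
import Mathlib

section
/- Let ω be a nonnegative integrable function on [0,1) with ω̂(r) = ∫_r^1 ω(s) ds > 0 for all r ∈ [0,1). Suppose there exist constants K > 1 and C > 1 such that ω̂(r) ≥ C·ω̂(1 − (1−r)/K) for all 0 ≤ r < 1. Then there exist constants C' > 0 and β > 0 such that ω̂(t) ≤ C'·((1−t)/(1−r))^β · ω̂(r) for all 0 ≤ r ≤ t < 1. One may take β = log C / log K. -/
open MeasureTheory Set

/-- Tail integral of a radial weight. -/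
noncomputable def tailInt (ω : ℝ → ℝ) (r : ℝ) : ℝ := ∫ s in Set.Ioo r 1, ω s

lemma tailInt_mono (ω : ℝ → ℝ)
    (hnn : ∀ r ∈ Set.Ico (0:ℝ) 1, 0 ≤ ω r)
    (hint : MeasureTheory.IntegrableOn ω (Set.Ico 0 1))
    {r t : ℝ} (hr : 0 ≤ r) (hrt : r ≤ t) :
    tailInt ω t ≤ tailInt ω r := by
  have hsub : Set.Ioo r 1 ⊆ Set.Ico (0:ℝ) 1 := fun x hx => ⟨le_trans hr hx.1.le, hx.2⟩
  apply setIntegral_mono_set (hint.mono_set hsub)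
  · exact (ae_restrict_iff' measurableSet_Ioo).2
      (Filter.Eventually.of_forall fun x hx => hnn x ⟨le_trans hr hx.1.le, hx.2⟩)
  · exact (Set.Ioo_subset_Ioo_left hrt).eventuallyLE

lemma tailInt_iter (ω : ℝ → ℝ) (K C : ℝ) (hK : 1 < K) (hC : 1 < C)
    (hD : ∀ r ∈ Set.Ico (0:ℝ) 1, C * tailInt ω (1 - (1 - r) / K) ≤ tailInt ω r)
    {r : ℝ} (hr : r ∈ Set.Ico (0:ℝ) 1) :
    ∀ n : ℕ, C ^ n * tailInt ω (1 - (1 - r) / K ^ n) ≤ tailInt ω r := by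
  intro n
  induction n with
  | zero => simp
  | succ n ih =>
    have hKpos : (0:ℝ) < K := lt_trans one_pos hK
    have hKn : (1:ℝ) ≤ K ^ n := one_le_pow₀ hK.le
    have h1r : 0 < 1 - r := by linarith [hr.2]
    have hrn : (1 - (1 - r) / K ^ n) ∈ Set.Ico (0:ℝ) 1 := by
      constructor
      · have : (1 - r) / K ^ n ≤ 1 - r := div_le_self h1r.le hKn
        linarith [hr.1]
      · have : 0 < (1 - r) / K ^ n := div_pos h1r (pow_pos hKpos n)
        linarith
    have key := hD _ hrn
    have hKn0 : (K:ℝ) ^ n ≠ 0 := ne_of_gt (pow_pos hKpos n)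
    have heq : 1 - (1 - (1 - (1 - r) / K ^ n)) / K = 1 - (1 - r) / K ^ (n+1) := by
      field_simp
      ring
    rw [heq] at key
    calc C ^ (n+1) * tailInt ω (1 - (1 - r) / K ^ (n+1))
        = C ^ n * (C * tailInt ω (1 - (1 - r) / K ^ (n+1))) := by ring
      _ ≤ C ^ n * tailInt ω (1 - (1 - r) / K ^ n) :=
          mul_le_mul_of_nonneg_left key (pow_nonneg (lt_trans one_pos hC).le n)
      _ ≤ tailInt ω r := ih

/-- Membership in the class Ď yields a power-type lower doubling estimate
of the tail integral, with exponent `β = log C / log K`. -/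
theorem Dd_implies_power_estimate (ω : ℝ → ℝ)
    (hnn : ∀ r ∈ Set.Ico (0:ℝ) 1, 0 ≤ ω r)
    (hint : MeasureTheory.IntegrableOn ω (Set.Ico 0 1))
    (hpos : ∀ r ∈ Set.Ico (0:ℝ) 1, 0 < tailInt ω r)
    (K C : ℝ) (hK : 1 < K) (hC : 1 < C)
    (hD : ∀ r ∈ Set.Ico (0:ℝ) 1, C * tailInt ω (1 - (1 - r) / K) ≤ tailInt ω r) :
    ∃ C' > (0:ℝ), ∀ r t : ℝ, 0 ≤ r → r ≤ t → t < 1 →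
      tailInt ω t ≤ C' * ((1 - t) / (1 - r)) ^ (Real.log C / Real.log K) * tailInt ω r := by
  have hCpos : (0:ℝ) < C := lt_trans one_pos hC
  have hKpos : (0:ℝ) < K := lt_trans one_pos hK
  have hlogK : 0 < Real.log K := Real.log_pos hK
  have hlogC : 0 < Real.log C := Real.log_pos hC
  refine ⟨C, hCpos, fun r t hr0 hrt ht1 => ?_⟩
  have hr1 : r < 1 := lt_of_le_of_lt hrt ht1
  have h1r : 0 < 1 - r := by linarith
  have h1t : 0 < 1 - t := by linarith
  set x : ℝ := (1 - r) / (1 - t) with hxdef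
  have hx1 : 1 ≤ x := (one_le_div h1t).2 (by linarith)
  have hxpos : 0 < x := lt_of_lt_of_le one_pos hx1
  have hlogx : 0 ≤ Real.log x := Real.log_nonneg hx1
  set u : ℝ := Real.log x / Real.log K with hudef
  have hu0 : 0 ≤ u := div_nonneg hlogx hlogK.le
  set n : ℕ := ⌊u⌋₊ with hndef
  -- K ^ n ≤ x
  have hKnx : K ^ n ≤ x := by
    have h1 : (n : ℝ) ≤ u := Nat.floor_le hu0
    have h2 : (n : ℝ) * Real.log K ≤ Real.log x := (le_div_iff₀ hlogK).1 h1
    have h3 : Real.log (K ^ n) ≤ Real.log x := by rwa [Real.log_pow]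
    exact (Real.log_le_log_iff (pow_pos hKpos n) hxpos).1 h3
  -- set rₙ and show rₙ ≤ t, 0 ≤ rₙ
  set rn : ℝ := 1 - (1 - r) / K ^ n with hrndef
  have hKnpos : (0:ℝ) < K ^ n := pow_pos hKpos n
  have hrn0 : r ≤ rn := by
    have : (1 - r) / K ^ n ≤ 1 - r := div_le_self h1r.le (one_le_pow₀ hK.le)
    simp only [hrndef]; linarith
  have hrnt : rn ≤ t := by
    have h1 : (1 - r) / x ≤ (1 - r) / K ^ n :=
      div_le_div_of_nonneg_left h1r.le hKnpos hKnx
    have h2 : (1 - r) / x = 1 - t := by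
      rw [hxdef]; field_simp
    simp only [hrndef]; linarith [h2 ▸ h1]
  -- tail t ≤ tail rn
  have hmono : tailInt ω t ≤ tailInt ω rn :=
    tailInt_mono ω hnn hint (le_trans hr0 hrn0) hrnt
  -- iteration
  have hiter : C ^ n * tailInt ω rn ≤ tailInt ω r :=
    tailInt_iter ω K C hK hC hD ⟨hr0, hr1⟩ n
  have hCn : (0:ℝ) < C ^ n := pow_pos hCpos n
  have htail : tailInt ω t ≤ tailInt ω r / C ^ n := by
    rw [le_div_iff₀ hCn]
    calc tailInt ω t * C ^ n ≤ tailInt ω rn * C ^ n :=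
          mul_le_mul_of_nonneg_right hmono hCn.le
      _ = C ^ n * tailInt ω rn := by ring
      _ ≤ tailInt ω r := hiter
  -- x ^ β ≤ C ^ (n+1)
  set β : ℝ := Real.log C / Real.log K with hβdef
  have hxβ : x ^ β ≤ C ^ (n + 1) := by
    have hu1 : u < (n : ℝ) + 1 := Nat.lt_floor_add_one u
    have h1 : Real.log x * β ≤ ((n : ℝ) + 1) * Real.log C := by
      have : Real.log x * β = u * Real.log C := by
        rw [hβdef, hudef]; ring
      rw [this]
      exact mul_le_mul_of_nonneg_right hu1.le hlogC.le
    calc x ^ β = Real.exp (Real.log x * β) := by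
          rw [Real.rpow_def_of_pos hxpos]
      _ ≤ Real.exp (((n : ℝ) + 1) * Real.log C) := Real.exp_le_exp.2 h1
      _ = C ^ (n + 1) := by
          have : ((n : ℝ) + 1) * Real.log C = ((n + 1 : ℕ) : ℝ) * Real.log C := by
            push_cast; ring
          rw [this, Real.exp_nat_mul, Real.exp_log hCpos]
  -- assemble
  have hxβpos : 0 < x ^ β := Real.rpow_pos_of_pos hxpos β
  have hinveq : ((1 - t) / (1 - r) : ℝ) = x⁻¹ := by rw [hxdef, inv_div]
  have hcoef : (C ^ n)⁻¹ ≤ C * ((1 - t) / (1 - r)) ^ β := by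
    rw [hinveq, Real.inv_rpow hxpos.le]
    rw [inv_eq_one_div, inv_eq_one_div, mul_one_div, div_le_div_iff₀ hCn hxβpos, one_mul]
    calc x ^ β ≤ C ^ (n + 1) := hxβ
      _ = C * C ^ n := by rw [pow_succ]; ring
  have hrpos : 0 < tailInt ω r := hpos r ⟨hr0, hr1⟩
  calc tailInt ω t ≤ tailInt ω r / C ^ n := htail
    _ = (C ^ n)⁻¹ * tailInt ω r := by ring
    _ ≤ C * ((1 - t) / (1 - r)) ^ β * tailInt ω r :=
        mul_le_mul_of_nonneg_right hcoef hrpos.le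
end

section
/- Let ω be a nonnegative integrable function on [0,1) with ω̂(r) > 0 for all r ∈ [0,1). Suppose that for some β > 0 there exists a constant C > 1 such that ω̂(r) ≤ C · ω̂_{[β]}(r)/(1−r)^β for all 0 ≤ r < 1, where ω̂_{[β]}(r) = ∫_r^1 ω(t)(1−t)^β dt. Then ω ∈ Ď, i.e., there exist K > 1 and C'' > 1 such that ω̂(r) ≥ C''·ω̂(1 − (1−r)/K) for all 0 ≤ r < 1. -/
open MeasureTheory Set

/-- If `ω̂(r) ≤ C ω̂_[β](r)/(1-r)^β` for some `β > 0`, then `ω ∈ Ď`. -/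
theorem tail_beta_bound_implies_Dd (ω : ℝ → ℝ)
    (hnn : ∀ r ∈ Set.Ico (0:ℝ) 1, 0 ≤ ω r)
    (hint : MeasureTheory.IntegrableOn ω (Set.Ico 0 1))
    (hpos : ∀ r ∈ Set.Ico (0:ℝ) 1, 0 < tailInt ω r)
    (β C : ℝ) (hβ : 0 < β) (hC : 1 < C)
    (h : ∀ r ∈ Set.Ico (0:ℝ) 1,
      tailInt ω r ≤ C * (∫ t in Set.Ioo r 1, ω t * (1 - t) ^ β) / (1 - r) ^ β) :
    ∃ K > (1:ℝ), ∃ C'' > (1:ℝ), ∀ r ∈ Set.Ico (0:ℝ) 1,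
      C'' * tailInt ω (1 - (1 - r) / K) ≤ tailInt ω r := by
  have hC0 : (0:ℝ) < C := lt_trans one_pos hC
  have h2C : (1:ℝ) < 2 * C := by nlinarith
  set K : ℝ := (2 * C) ^ (β⁻¹) with hKdef
  have hK1 : 1 < K := by
    rw [hKdef]
    exact Real.one_lt_rpow_iff_of_pos (by linarith) |>.mpr (Or.inl ⟨h2C, by positivity⟩)
  have hK0 : (0:ℝ) < K := lt_trans one_pos hK1
  have hKβ : K ^ β = 2 * C := by
    rw [hKdef, ← Real.rpow_mul (by linarith : (0:ℝ) ≤ 2 * C),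
      inv_mul_cancel₀ hβ.ne', Real.rpow_one]
  refine ⟨K, hK1, 1 + 1 / (2 * (C - 1)), by
    have : 0 < 2 * (C - 1) := by linarith
    have : 0 < 1 / (2 * (C - 1)) := by positivity
    linarith, ?_⟩
  intro r hr
  obtain ⟨hr0, hr1⟩ := hr
  set ρ : ℝ := 1 - (1 - r) / K with hρdef
  have h1r : (0:ℝ) < 1 - r := by linarith
  have hfrac : 0 < (1 - r) / K := by positivity
  have hfrac' : (1 - r) / K < 1 - r := by
    rw [div_lt_iff₀ hK0]; nlinarith
  have hrρ : r < ρ := by rw [hρdef]; linarith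
  have hρ1 : ρ < 1 := by rw [hρdef]; linarith
  have hρ0 : 0 ≤ ρ := by linarith
  have h1ρ : 1 - ρ = (1 - r) / K := by rw [hρdef]; ring
  -- subsets
  have hsub1 : Set.Ioo r 1 ⊆ Set.Ico 0 1 := fun x hx => ⟨le_trans hr0 hx.1.le, hx.2⟩
  have hsub2 : Set.Ioc r ρ ⊆ Set.Ico 0 1 :=
    fun x hx => ⟨le_trans hr0 hx.1.le, lt_of_le_of_lt hx.2 hρ1⟩
  have hsub3 : Set.Ioo ρ 1 ⊆ Set.Ico 0 1 := fun x hx => ⟨le_trans hρ0 hx.1.le, hx.2⟩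
  have hInt1 : IntegrableOn ω (Set.Ioo r 1) := hint.mono_set hsub1
  have hInt2 : IntegrableOn ω (Set.Ioc r ρ) := hint.mono_set hsub2
  have hInt3 : IntegrableOn ω (Set.Ioo ρ 1) := hint.mono_set hsub3
  -- integrability of weighted function
  have hmeasg : AEStronglyMeasurable (fun t => ω t * (1 - t) ^ β)
      (volume.restrict (Set.Ico (0:ℝ) 1)) :=
    hint.aestronglyMeasurable.mul
      ((measurable_const.sub measurable_id).pow_const β).aestronglyMeasurable
  have hIntg : ∀ s : Set ℝ, MeasurableSet s → s ⊆ Set.Ico (0:ℝ) 1 →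
      IntegrableOn (fun t => ω t * (1 - t) ^ β) s := by
    intro s hs hss
    refine Integrable.mono (hint.mono_set hss)
      ((hmeasg.mono_set hss)) ?_
    filter_upwards [ae_restrict_mem hs] with t ht
    have ht' := hss ht
    have h0t : 0 ≤ 1 - t := by have := ht'.2; linarith
    have h1t : 1 - t ≤ 1 := by have := ht'.1; linarith
    have hb : (1 - t) ^ β ≤ 1 := Real.rpow_le_one h0t h1t hβ.le
    have hb0 : 0 ≤ (1 - t) ^ β := Real.rpow_nonneg h0t β
    rw [norm_mul]
    calc ‖ω t‖ * ‖(1 - t) ^ β‖ ≤ ‖ω t‖ * 1 := by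
          apply mul_le_mul_of_nonneg_left _ (norm_nonneg _)
          rw [Real.norm_eq_abs, abs_of_nonneg hb0]; exact hb
      _ = ‖ω t‖ := mul_one _
  have hIntg1 := hIntg _ measurableSet_Ioo hsub1
  have hIntg2 := hIntg _ measurableSet_Ioc hsub2
  have hIntg3 := hIntg _ measurableSet_Ioo hsub3
  -- splitting
  have hdisj : Disjoint (Set.Ioc r ρ) (Set.Ioo ρ 1) := by
    rw [Set.disjoint_left]
    rintro x ⟨_, hx2⟩ ⟨hx3, _⟩
    exact absurd hx2 (not_le.mpr hx3)
  have hunion : Set.Ioc r ρ ∪ Set.Ioo ρ 1 = Set.Ioo r 1 :=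
    Set.Ioc_union_Ioo_eq_Ioo hrρ.le hρ1
  have hsplitω : tailInt ω r = (∫ t in Set.Ioc r ρ, ω t) + tailInt ω ρ := by
    unfold tailInt
    rw [← hunion, setIntegral_union hdisj measurableSet_Ioo hInt2 hInt3]
  have hsplitg : (∫ t in Set.Ioo r 1, ω t * (1 - t) ^ β)
      = (∫ t in Set.Ioc r ρ, ω t * (1 - t) ^ β)
        + (∫ t in Set.Ioo ρ 1, ω t * (1 - t) ^ β) := by
    rw [← hunion, setIntegral_union hdisj measurableSet_Ioo hIntg2 hIntg3]
  set A : ℝ := ∫ t in Set.Ioc r ρ, ω t with hA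
  set B : ℝ := tailInt ω ρ with hB
  -- bounds on the two pieces
  have hbound2 : (∫ t in Set.Ioc r ρ, ω t * (1 - t) ^ β) ≤ (1 - r) ^ β * A := by
    have : (∫ t in Set.Ioc r ρ, ω t * (1 - t) ^ β)
        ≤ ∫ t in Set.Ioc r ρ, ω t * (1 - r) ^ β := by
      apply setIntegral_mono_on hIntg2 (hInt2.mul_const _) measurableSet_Ioc
      intro t ht
      have ht' := hsub2 ht
      have h0t : 0 ≤ 1 - t := by have := ht'.2; linarith
      have h1t : 1 - t ≤ 1 - r := by have := ht.1; linarith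
      exact mul_le_mul_of_nonneg_left (Real.rpow_le_rpow h0t h1t hβ.le)
        (hnn t ht')
    rw [integral_mul_const] at this
    linarith [this]
  have hbound3 : (∫ t in Set.Ioo ρ 1, ω t * (1 - t) ^ β) ≤ (1 - ρ) ^ β * B := by
    have : (∫ t in Set.Ioo ρ 1, ω t * (1 - t) ^ β)
        ≤ ∫ t in Set.Ioo ρ 1, ω t * (1 - ρ) ^ β := by
      apply setIntegral_mono_on hIntg3 (hInt3.mul_const _) measurableSet_Ioo
      intro t ht
      have ht' := hsub3 ht
      have h0t : 0 ≤ 1 - t := by have := ht'.2; linarith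
      have h1t : 1 - t ≤ 1 - ρ := by have := ht.1; linarith
      exact mul_le_mul_of_nonneg_left (Real.rpow_le_rpow h0t h1t hβ.le)
        (hnn t ht')
    rw [integral_mul_const] at this
    rw [hB]; unfold tailInt
    linarith [this]
  -- nonnegativity
  have hA0 : 0 ≤ A := by
    rw [hA]
    exact setIntegral_nonneg measurableSet_Ioc (fun t ht => hnn t (hsub2 ht))
  have hB0 : 0 ≤ B := by
    rw [hB]; unfold tailInt
    exact setIntegral_nonneg measurableSet_Ioo (fun t ht => hnn t (hsub3 ht))
  -- powers
  have hpow_pos : (0:ℝ) < (1 - r) ^ β := Real.rpow_pos_of_pos h1r β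
  have hρpow : (1 - ρ) ^ β = (1 - r) ^ β / (2 * C) := by
    rw [h1ρ, Real.div_rpow h1r.le hK0.le, hKβ]
  -- main inequality from hypothesis
  have hhr := h r ⟨hr0, hr1⟩
  have hIle : C * (∫ t in Set.Ioo r 1, ω t * (1 - t) ^ β)
      ≤ (1 - r) ^ β * (C * A + B / 2) := by
    rw [hsplitg]
    have := hbound2
    have := hbound3
    rw [hρpow] at hbound3
    have hCA : C * (∫ t in Set.Ioc r ρ, ω t * (1 - t) ^ β) ≤ C * ((1 - r) ^ β * A) :=
      mul_le_mul_of_nonneg_left hbound2 hC0.le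
    have hCB : C * (∫ t in Set.Ioo ρ 1, ω t * (1 - t) ^ β)
        ≤ C * ((1 - r) ^ β / (2 * C) * B) :=
      mul_le_mul_of_nonneg_left hbound3 hC0.le
    have heq : C * ((1 - r) ^ β / (2 * C) * B) = (1 - r) ^ β * (B / 2) := by
      field_simp
    nlinarith [hCA, hCB]
  have hdiv : C * (∫ t in Set.Ioo r 1, ω t * (1 - t) ^ β) / (1 - r) ^ β
      ≤ C * A + B / 2 := by
    rw [div_le_iff₀ hpow_pos]
    linarith [hIle]
  have hkey : A + B ≤ C * A + B / 2 := by
    calc A + B = tailInt ω r := hsplitω.symm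
      _ ≤ _ := hhr
      _ ≤ C * A + B / 2 := hdiv
  -- conclude
  rw [hsplitω]
  have hC1 : (0:ℝ) < C - 1 := by linarith
  have hAB : B / 2 ≤ (C - 1) * A := by nlinarith
  have : (1 + 1 / (2 * (C - 1))) * B = B + B / (2 * (C - 1)) := by ring
  rw [this]
  have : B / (2 * (C - 1)) ≤ A := by
    rw [div_le_iff₀ (by linarith : (0:ℝ) < 2 * (C - 1))]
    calc B ≤ 2 * ((C - 1) * A) := by linarith
      _ = A * (2 * (C - 1)) := by ring
  linarith
end

section
/- Let ω be a nonnegative integrable function on [0,1) with ω̂(r) > 0 for all r, and suppose ω ∈ Ď. Then for any γ ≥ 0, the weight ω_{[γ]}(r) = ω(r)(1−r)^γ also belongs to Ď. -/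
open MeasureTheory Set

/-- The class Ď of radial weights. -/
def memDd (ω : ℝ → ℝ) : Prop :=
  ∃ K > (1:ℝ), ∃ C > (1:ℝ), ∀ r ∈ Set.Ico (0:ℝ) 1,
    C * tailInt ω (1 - (1 - r) / K) ≤ tailInt ω r

lemma intOn_Ioo {ν : ℝ → ℝ} (h : IntegrableOn ν (Set.Ico 0 1)) {a : ℝ} (ha : 0 ≤ a) :
    IntegrableOn ν (Set.Ioo a 1) :=
  h.mono_set fun x hx => ⟨le_of_lt (lt_of_le_of_lt ha hx.1), hx.2⟩

lemma intOn_Ioo' {ν : ℝ → ℝ} (h : IntegrableOn ν (Set.Ico 0 1)) {a b : ℝ} (ha : 0 ≤ a)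
    (hb : b ≤ 1) : IntegrableOn ν (Set.Ioo a b) :=
  (intOn_Ioo h ha).mono_set fun x hx => ⟨hx.1, lt_of_lt_of_le hx.2 hb⟩

lemma tail_split {ν : ℝ → ℝ} (h : IntegrableOn ν (Set.Ico 0 1)) {r ρ : ℝ}
    (hr : 0 ≤ r) (hrρ : r < ρ) (hρ : ρ < 1) :
    tailInt ν r = (∫ s in Set.Ioo r ρ, ν s) + tailInt ν ρ := by
  have h1 : IntegrableOn ν (Set.Ioo r ρ) := intOn_Ioo' h hr hρ.le
  have h2 : IntegrableOn ν (Set.Ico ρ 1) := by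
    rw [integrableOn_Ico_iff_integrableOn_Ioo]
    exact intOn_Ioo h (hr.trans hrρ.le)
  have hu : Set.Ioo r 1 = Set.Ioo r ρ ∪ Set.Ico ρ 1 := (Set.Ioo_union_Ico_eq_Ioo hrρ hρ.le).symm
  have hd : Disjoint (Set.Ioo r ρ) (Set.Ico ρ 1) :=
    Set.disjoint_left.mpr fun x hx hx' => absurd hx.2 (not_lt.mpr hx'.1)
  unfold tailInt
  rw [hu, MeasureTheory.setIntegral_union hd measurableSet_Ico h1 h2,
    MeasureTheory.integral_Ico_eq_integral_Ioo]

lemma int_wg {ω : ℝ → ℝ} (hint : IntegrableOn ω (Set.Ico 0 1)) {γ : ℝ} (hγ : 0 ≤ γ) :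
    IntegrableOn (fun s => ω s * (1 - s) ^ γ) (Set.Ico 0 1) := by
  refine hint.abs.mono' ?_ ?_
  · exact hint.aestronglyMeasurable.mul
      (((Real.continuous_rpow_const hγ).comp (continuous_const.sub continuous_id)).aestronglyMeasurable)
  · filter_upwards [ae_restrict_mem measurableSet_Ico] with s hs
    have h0 : (0:ℝ) ≤ 1 - s := by linarith [hs.2]
    have h1 : (1 - s : ℝ) ≤ 1 := by linarith [hs.1]
    have hle : (1 - s) ^ γ ≤ 1 := Real.rpow_le_one h0 h1 hγ
    have hge : (0:ℝ) ≤ (1 - s) ^ γ := Real.rpow_nonneg h0 γ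
    rw [Real.norm_eq_abs, abs_mul, abs_of_nonneg hge]
    calc |ω s| * (1 - s) ^ γ ≤ |ω s| * 1 :=
          mul_le_mul_of_nonneg_left hle (abs_nonneg _)
      _ = |ω s| := mul_one _

/-- The class Ď is closed under multiplication by `(1-r)^γ` for `γ ≥ 0`. -/
theorem Dd_closed_under_power_weight (ω : ℝ → ℝ)
    (hnn : ∀ r ∈ Set.Ico (0:ℝ) 1, 0 ≤ ω r)
    (hint : MeasureTheory.IntegrableOn ω (Set.Ico 0 1))
    (hpos : ∀ r ∈ Set.Ico (0:ℝ) 1, 0 < tailInt ω r)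
    (hDd : memDd ω) :
    ∀ γ : ℝ, 0 ≤ γ → memDd (fun r => ω r * (1 - r) ^ γ) := by
  intro γ hγ
  obtain ⟨K, hK, C, hC, hDD⟩ := hDd
  obtain ⟨n, hn⟩ : ∃ n : ℕ, 2 < C ^ n := pow_unbounded_of_one_lt 2 hC
  have hK0 : (0:ℝ) < K := lt_trans one_pos hK
  have hiter : ∀ m : ℕ, ∀ r ∈ Set.Ico (0:ℝ) 1,
      C ^ m * tailInt ω (1 - (1 - r) / K ^ m) ≤ tailInt ω r := by
    intro m
    induction m with
    | zero => intro r hr; simp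
    | succ m ih =>
      intro r hr
      set ρ := 1 - (1 - r) / K with hρdef
      have hr1 : r < 1 := hr.2
      have hρlt : ρ < 1 := by
        have : 0 < (1 - r) / K := div_pos (by linarith) hK0
        simp only [hρdef]; linarith
      have hrρ : r ≤ ρ := by
        have : (1 - r) / K ≤ 1 - r := by
          rw [div_le_iff₀ hK0]; nlinarith
        simp only [hρdef]; linarith
      have hρmem : ρ ∈ Set.Ico (0:ℝ) 1 := ⟨le_trans hr.1 hrρ, hρlt⟩
      have h1 := ih ρ hρmem
      have h2 := hDD r hr
      have key : 1 - (1 - ρ) / K ^ m = 1 - (1 - r) / K ^ (m + 1) := by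
        have hρ' : 1 - ρ = (1 - r) / K := by simp [hρdef]
        have hKm : (K:ℝ) ^ m ≠ 0 := pow_ne_zero m (ne_of_gt hK0)
        rw [hρ', pow_succ]
        field_simp
      calc C ^ (m + 1) * tailInt ω (1 - (1 - r) / K ^ (m + 1))
          = C * (C ^ m * tailInt ω (1 - (1 - ρ) / K ^ m)) := by rw [key]; ring
        _ ≤ C * tailInt ω ρ := mul_le_mul_of_nonneg_left h1 (by linarith)
        _ ≤ tailInt ω r := h2
  have hn0 : n ≠ 0 := by
    intro h; rw [h, pow_zero] at hn; linarith
  refine ⟨K ^ n, one_lt_pow₀ hK hn0, C ^ n - 1, by linarith, ?_⟩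
  intro r hr
  have hr0 : (0:ℝ) ≤ r := hr.1
  have hr1 : r < 1 := hr.2
  have hKn1 : (1:ℝ) < K ^ n := one_lt_pow₀ hK hn0
  have hKn0 : (0:ℝ) < K ^ n := lt_trans one_pos hKn1
  set ρ := 1 - (1 - r) / K ^ n with hρdef
  have hdivpos : 0 < (1 - r) / K ^ n := div_pos (by linarith) hKn0
  have hρ1 : ρ < 1 := by simp only [hρdef]; linarith
  have hrρ : r < ρ := by
    have : (1 - r) / K ^ n < 1 - r := by
      rw [div_lt_iff₀ hKn0]; nlinarith
    simp only [hρdef]; linarith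
  have hρ0 : (0:ℝ) ≤ ρ := le_of_lt (lt_of_le_of_lt hr0 hrρ)
  set νγ := fun s : ℝ => ω s * (1 - s) ^ γ with hνγ
  have hintγ : IntegrableOn νγ (Set.Ico 0 1) := int_wg hint hγ
  -- splits
  have e1 : tailInt νγ r = (∫ s in Set.Ioo r ρ, νγ s) + tailInt νγ ρ :=
    tail_split hintγ hr0 hrρ hρ1
  have e3 : tailInt ω r = (∫ s in Set.Ioo r ρ, ω s) + tailInt ω ρ :=
    tail_split hint hr0 hrρ hρ1
  set B := (1 - ρ) ^ γ with hB
  have hBnn : (0:ℝ) ≤ B := Real.rpow_nonneg (by linarith) γ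
  -- lower bound on the middle piece
  have e2 : B * (∫ s in Set.Ioo r ρ, ω s) ≤ ∫ s in Set.Ioo r ρ, νγ s := by
    rw [← integral_const_mul]
    apply MeasureTheory.setIntegral_mono_on
    · exact (intOn_Ioo' hint hr0 hρ1.le).const_mul B
    · exact hintγ.mono_set fun x hx =>
        ⟨le_of_lt (lt_of_le_of_lt hr0 hx.1), lt_trans hx.2 hρ1⟩
    · exact measurableSet_Ioo
    · intro s hs
      have hsmem : s ∈ Set.Ico (0:ℝ) 1 :=
        ⟨le_of_lt (lt_of_le_of_lt hr0 hs.1), lt_trans hs.2 hρ1⟩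
      have hωs : 0 ≤ ω s := hnn s hsmem
      have hBle : B ≤ (1 - s) ^ γ :=
        Real.rpow_le_rpow (by linarith) (by linarith [hs.2]) hγ
      calc B * ω s = ω s * B := mul_comm _ _
        _ ≤ ω s * (1 - s) ^ γ := mul_le_mul_of_nonneg_left hBle hωs
  -- upper bound on the tail at ρ
  have e5 : tailInt νγ ρ ≤ B * tailInt ω ρ := by
    unfold tailInt
    rw [← integral_const_mul]
    apply MeasureTheory.setIntegral_mono_on
    · exact intOn_Ioo hintγ hρ0
    · exact (intOn_Ioo hint hρ0).const_mul B
    · exact measurableSet_Ioo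
    · intro s hs
      have hsmem : s ∈ Set.Ico (0:ℝ) 1 := ⟨le_trans hρ0 hs.1.le, hs.2⟩
      have hωs : 0 ≤ ω s := hnn s hsmem
      have hBge : (1 - s) ^ γ ≤ B :=
        Real.rpow_le_rpow (by linarith [hs.2]) (by linarith [hs.1]) hγ
      calc ω s * (1 - s) ^ γ ≤ ω s * B := mul_le_mul_of_nonneg_left hBge hωs
        _ = B * ω s := mul_comm _ _
  have e4 : C ^ n * tailInt ω ρ ≤ tailInt ω r := hiter n r hr
  have hTγρnn : 0 ≤ tailInt νγ ρ := by
    apply MeasureTheory.setIntegral_nonneg measurableSet_Ioo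
    intro s hs
    exact mul_nonneg (hnn s ⟨le_trans hρ0 hs.1.le, hs.2⟩)
      (Real.rpow_nonneg (by linarith [hs.2]) γ)
  have hTρnn : 0 ≤ tailInt ω ρ := le_of_lt (hpos ρ ⟨hρ0, hρ1⟩)
  have key1 : (C ^ n - 1) * tailInt νγ ρ ≤ (C ^ n - 1) * (B * tailInt ω ρ) :=
    mul_le_mul_of_nonneg_left e5 (by linarith)
  have key2 : B * (C ^ n * tailInt ω ρ) ≤ B * tailInt ω r :=
    mul_le_mul_of_nonneg_left e4 hBnn
  nlinarith [key1, key2, e1, e2, e3, hTγρnn, hBnn, hTρnn]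
end

section
/- Let ω be a nonnegative integrable function on [0,1) with ω̂(r) > 0 for all r, and suppose ω ∈ M, i.e., there exist constants C > 1 and K > 1 with ω_x ≥ C·ω_{Kx} for all x ≥ 1, where ω_x = ∫_0^1 r^x ω(r) dr. Then there exist constants C₂ > 0 and η > 0 such that ω_x ≥ C₂·(y/x)^η·ω_y for all 1 ≤ x ≤ y < ∞. One may take η = log_K C. -/
open MeasureTheory Set

/-- Moment of a radial weight: `ω_x = ∫_0^1 r^x ω(r) dr`. -/
noncomputable def mom (ω : ℝ → ℝ) (x : ℝ) : ℝ := ∫ r in Set.Ioo (0:ℝ) 1, r ^ x * ω r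

lemma mom_integrand_integrable (ω : ℝ → ℝ)
    (hint : MeasureTheory.IntegrableOn ω (Set.Ico 0 1)) (x : ℝ) (hx : 0 ≤ x) :
    MeasureTheory.IntegrableOn (fun r => r ^ x * ω r) (Set.Ioo (0:ℝ) 1) := by
  have h1 : MeasureTheory.IntegrableOn ω (Set.Ioo (0:ℝ) 1) :=
    hint.mono_set Set.Ioo_subset_Ico_self
  refine h1.norm.mono' ?_ ?_
  · have hc : ContinuousOn (fun r : ℝ => r ^ x) (Set.Ioo (0:ℝ) 1) :=
      ContinuousOn.rpow_const continuousOn_id (fun r hr => Or.inl hr.1.ne')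
    exact (hc.aestronglyMeasurable measurableSet_Ioo).mul h1.aestronglyMeasurable
  · rw [MeasureTheory.ae_restrict_iff' measurableSet_Ioo]
    filter_upwards with r hr
    have h0 : (0:ℝ) < r := hr.1
    have h1' : r ≤ 1 := hr.2.le
    have hr1 : r ^ x ≤ 1 := Real.rpow_le_one h0.le h1' hx
    have hr0 : 0 ≤ r ^ x := Real.rpow_nonneg h0.le x
    rw [norm_mul, Real.norm_eq_abs, abs_of_nonneg hr0]
    calc r ^ x * ‖ω r‖ ≤ 1 * ‖ω r‖ :=
          mul_le_mul_of_nonneg_right hr1 (norm_nonneg _)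
      _ = ‖ω r‖ := one_mul _

lemma mom_nonneg (ω : ℝ → ℝ) (hnn : ∀ r ∈ Set.Ico (0:ℝ) 1, 0 ≤ ω r) (x : ℝ) :
    0 ≤ mom ω x := by
  refine MeasureTheory.setIntegral_nonneg measurableSet_Ioo fun r hr => ?_
  exact mul_nonneg (Real.rpow_nonneg hr.1.le x) (hnn r ⟨hr.1.le, hr.2⟩)

lemma mom_anti (ω : ℝ → ℝ) (hnn : ∀ r ∈ Set.Ico (0:ℝ) 1, 0 ≤ ω r)
    (hint : MeasureTheory.IntegrableOn ω (Set.Ico 0 1))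
    {a b : ℝ} (ha : 0 ≤ a) (hab : a ≤ b) : mom ω b ≤ mom ω a := by
  refine MeasureTheory.setIntegral_mono_on
    (mom_integrand_integrable ω hint b (ha.trans hab))
    (mom_integrand_integrable ω hint a ha) measurableSet_Ioo fun r hr => ?_
  exact mul_le_mul_of_nonneg_right
    (Real.rpow_le_rpow_of_exponent_ge hr.1 hr.2.le hab) (hnn r ⟨hr.1.le, hr.2⟩)

/-- For `ω ∈ M` the moments satisfy the power-decay estimate
`ω_x ≥ C₂ (y/x)^η ω_y` with `η = log C / log K`. -/
theorem M_implies_moment_power_decay (ω : ℝ → ℝ)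
    (hnn : ∀ r ∈ Set.Ico (0:ℝ) 1, 0 ≤ ω r)
    (hint : MeasureTheory.IntegrableOn ω (Set.Ico 0 1))
    (C K : ℝ) (hC : 1 < C) (hK : 1 < K)
    (hM : ∀ x : ℝ, 1 ≤ x → C * mom ω (K * x) ≤ mom ω x) :
    ∃ C₂ > (0:ℝ), ∀ x y : ℝ, 1 ≤ x → x ≤ y →
      C₂ * (y / x) ^ (Real.log C / Real.log K) * mom ω y ≤ mom ω x := by
  have hC0 : (0:ℝ) < C := lt_trans one_pos hC
  have hK0 : (0:ℝ) < K := lt_trans one_pos hK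
  have hlogK : 0 < Real.log K := Real.log_pos hK
  have hlogC : 0 < Real.log C := Real.log_pos hC
  -- iterated inequality
  have iter : ∀ n : ℕ, ∀ x : ℝ, 1 ≤ x → C ^ n * mom ω (K ^ n * x) ≤ mom ω x := by
    intro n
    induction n with
    | zero => intro x hx; simp
    | succ n ih =>
      intro x hx
      have hKx : 1 ≤ K * x := by nlinarith
      have h1 := ih (K * x) hKx
      have h2 := hM x hx
      have hpow : K ^ (n + 1) * x = K ^ n * (K * x) := by ring
      calc C ^ (n + 1) * mom ω (K ^ (n + 1) * x)
          = C * (C ^ n * mom ω (K ^ n * (K * x))) := by rw [hpow]; ring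
        _ ≤ C * mom ω (K * x) := by
            exact mul_le_mul_of_nonneg_left h1 hC0.le
        _ ≤ mom ω x := h2
  refine ⟨C⁻¹, inv_pos.mpr hC0, fun x y hx hxy => ?_⟩
  have hx0 : (0:ℝ) < x := lt_of_lt_of_le one_pos hx
  have hy0 : (0:ℝ) < y := lt_of_lt_of_le hx0 hxy
  have hq1 : (1:ℝ) ≤ y / x := (one_le_div hx0).mpr hxy
  have hq0 : (0:ℝ) < y / x := lt_of_lt_of_le one_pos hq1
  set t : ℝ := Real.log (y / x) / Real.log K with ht
  have ht0 : 0 ≤ t := div_nonneg (Real.log_nonneg hq1) hlogK.le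
  set n : ℕ := ⌊t⌋₊ with hn
  have hnt : (n:ℝ) ≤ t := Nat.floor_le ht0
  have htn : t < n + 1 := Nat.lt_floor_add_one t
  -- K^n * x ≤ y
  have hKn : K ^ n * x ≤ y := by
    have h1 : (K:ℝ) ^ n ≤ y / x := by
      have : (K:ℝ) ^ n = Real.exp ((n:ℝ) * Real.log K) := by
        rw [← Real.rpow_natCast K n, Real.rpow_def_of_pos hK0, mul_comm]
      rw [this]
      have h2 : (n:ℝ) * Real.log K ≤ Real.log (y / x) := by
        have := mul_le_mul_of_nonneg_right hnt hlogK.le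
        rwa [ht, div_mul_cancel₀ _ hlogK.ne'] at this
      calc Real.exp ((n:ℝ) * Real.log K) ≤ Real.exp (Real.log (y / x)) :=
            Real.exp_le_exp.mpr h2
        _ = y / x := Real.exp_log hq0
    calc K ^ n * x ≤ (y / x) * x := mul_le_mul_of_nonneg_right h1 hx0.le
      _ = y := div_mul_cancel₀ y hx0.ne'
  -- (y/x)^η ≤ C^(n+1)
  have hpow : (y / x) ^ (Real.log C / Real.log K) ≤ C ^ (n + 1) := by
    have h1 : (y / x) ^ (Real.log C / Real.log K)
        = Real.exp (t * Real.log C) := by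
      rw [Real.rpow_def_of_pos hq0, ht]; ring_nf
    have h2 : (C:ℝ) ^ (n + 1) = Real.exp (((n:ℝ) + 1) * Real.log C) := by
      rw [← Real.rpow_natCast C (n + 1), Real.rpow_def_of_pos hC0, mul_comm]
      push_cast; ring_nf
    rw [h1, h2]
    exact Real.exp_le_exp.mpr (mul_le_mul_of_nonneg_right htn.le hlogC.le)
  have hmy : 0 ≤ mom ω y := mom_nonneg ω hnn y
  have hmono : mom ω y ≤ mom ω (K ^ n * x) :=
    mom_anti ω hnn hint (by positivity) hKn
  have hiter := iter n x hx
  calc C⁻¹ * (y / x) ^ (Real.log C / Real.log K) * mom ω y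
      ≤ C⁻¹ * C ^ (n + 1) * mom ω y := by
        apply mul_le_mul_of_nonneg_right _ hmy
        exact mul_le_mul_of_nonneg_left hpow (inv_pos.mpr hC0).le
    _ = C ^ n * mom ω y := by
        field_simp; ring
    _ ≤ C ^ n * mom ω (K ^ n * x) :=
        mul_le_mul_of_nonneg_left hmono (pow_pos hC0 n).le
    _ ≤ mom ω x := hiter
end

section
/- Let ω be a nonnegative integrable function on [0,1) that belongs to M (ω_x ≥ C·ω_{Kx} for some C > 1, K > 1 and all x ≥ 1). Then for each β > 0 there exists a constant C₁ > 0 such that ω_x ≤ C₁·x^β·(ω_{[β]})_x for all 1 ≤ x < ∞, where (ω_{[β]})_x = ∫_0^1 r^x (1−r)^β ω(r) dr. -/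
open MeasureTheory Set

private lemma integrable_aux (ω : ℝ → ℝ)
    (hint : MeasureTheory.IntegrableOn ω (Set.Ico 0 1)) (g : ℝ → ℝ)
    (hg : Measurable g) (hgb : ∀ r ∈ Set.Ioo (0:ℝ) 1, |g r| ≤ 1) :
    MeasureTheory.IntegrableOn (fun r => g r * ω r) (Set.Ioo (0:ℝ) 1) := by
  have h1 : IntegrableOn ω (Set.Ioo 0 1) := hint.mono_set Set.Ioo_subset_Ico_self
  refine Integrable.mono' h1.abs
    (hg.aestronglyMeasurable.mul h1.aestronglyMeasurable) ?_
  filter_upwards [ae_restrict_mem measurableSet_Ioo] with r hr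
  have : ‖g r * ω r‖ = |g r| * |ω r| := by rw [norm_mul]; rfl
  rw [this]
  calc |g r| * |ω r| ≤ 1 * |ω r| :=
        mul_le_mul_of_nonneg_right (hgb r hr) (abs_nonneg _)
    _ = |ω r| := one_mul _

set_option maxHeartbeats 1000000 in
/-- If `ω ∈ M` then for each `β > 0` one has `ω_x ≤ C₁ x^β (ω_[β])_x` for all `x ≥ 1`. -/
theorem M_implies_moment_beta_bound (ω : ℝ → ℝ)
    (hnn : ∀ r ∈ Set.Ico (0:ℝ) 1, 0 ≤ ω r)
    (hint : MeasureTheory.IntegrableOn ω (Set.Ico 0 1))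
    (C K : ℝ) (hC : 1 < C) (hK : 1 < K)
    (hM : ∀ x : ℝ, 1 ≤ x → C * mom ω (K * x) ≤ mom ω x) :
    ∀ β : ℝ, 0 < β → ∃ C₁ > (0:ℝ), ∀ x : ℝ, 1 ≤ x →
      mom ω x ≤ C₁ * x ^ β * ∫ r in Set.Ioo (0:ℝ) 1, r ^ x * (1 - r) ^ β * ω r := by
  intro β hβ
  have hK0 : (0:ℝ) < K := lt_trans one_pos hK
  -- basic facts
  have hω : ∀ r ∈ Set.Ioo (0:ℝ) 1, 0 ≤ ω r := fun r hr => hnn r ⟨hr.1.le, hr.2⟩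
  have hIntx : ∀ y : ℝ, 0 ≤ y →
      IntegrableOn (fun r => r ^ y * ω r) (Set.Ioo (0:ℝ) 1) := by
    intro y hy
    refine integrable_aux ω hint _ (by fun_prop) ?_
    intro r hr
    rw [abs_of_nonneg (Real.rpow_nonneg hr.1.le _)]
    exact Real.rpow_le_one hr.1.le hr.2.le hy
  have hIntβ : ∀ y : ℝ, 0 ≤ y →
      IntegrableOn (fun r => r ^ y * (1 - r) ^ β * ω r) (Set.Ioo (0:ℝ) 1) := by
    intro y hy
    have := integrable_aux ω hint (fun r => r ^ y * (1 - r) ^ β) (by fun_prop) ?_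
    · simpa [mul_assoc] using this
    · intro r hr
      have h1 : (0:ℝ) ≤ r ^ y := Real.rpow_nonneg hr.1.le _
      have h2 : (0:ℝ) ≤ (1 - r) ^ β := Real.rpow_nonneg (by linarith [hr.2]) _
      rw [abs_of_nonneg (mul_nonneg h1 h2)]
      calc r ^ y * (1 - r) ^ β ≤ 1 * 1 := by
            apply mul_le_mul _ _ h2 zero_le_one
            · exact Real.rpow_le_one hr.1.le hr.2.le hy
            · exact Real.rpow_le_one (by linarith [hr.2]) (by linarith [hr.1]) hβ.le
        _ = 1 := one_mul 1
  have hmomnn : ∀ y : ℝ, 0 ≤ mom ω y := by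
    intro y
    apply setIntegral_nonneg measurableSet_Ioo
    intro r hr
    exact mul_nonneg (Real.rpow_nonneg hr.1.le _) (hω r hr)
  -- iteration of the M-condition
  have hiter : ∀ n : ℕ, ∀ x : ℝ, 1 ≤ x → C ^ n * mom ω (K ^ n * x) ≤ mom ω x := by
    intro n
    induction n with
    | zero => intro x hx; simp
    | succ n ih =>
      intro x hx
      have hKx : (1:ℝ) ≤ K ^ n * x := by
        have : (1:ℝ) ≤ K ^ n := one_le_pow₀ hK.le
        nlinarith
      have h1 : C * mom ω (K * (K ^ n * x)) ≤ mom ω (K ^ n * x) := hM _ hKx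
      have heq : K ^ (n + 1) * x = K * (K ^ n * x) := by ring
      have hCn : (0:ℝ) ≤ C ^ n := pow_nonneg (by linarith) n
      calc C ^ (n + 1) * mom ω (K ^ (n + 1) * x)
          = C ^ n * (C * mom ω (K * (K ^ n * x))) := by rw [heq]; ring
        _ ≤ C ^ n * mom ω (K ^ n * x) := mul_le_mul_of_nonneg_left h1 hCn
        _ ≤ mom ω x := ih x hx
  -- choose`n`
  set E : ℝ := Real.exp (K / (K - 1)) with hE
  have hE1 : 1 ≤ E := by
    rw [hE]
    have : (0:ℝ) ≤ K / (K - 1) := div_nonneg (by linarith) (by linarith)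
    calc (1:ℝ) = Real.exp 0 := Real.exp_zero.symm
      _ ≤ E := Real.exp_le_exp.mpr this
  obtain ⟨n, hn⟩ := pow_unbounded_of_one_lt (2 * E) hC
  set A : ℝ := K ^ n with hA
  have hA1 : 1 < A := by
    rcases Nat.eq_zero_or_pos n with h | h
    · exfalso; rw [h] at hn; simp at hn; linarith
    · exact one_lt_pow₀ hK h.ne'
  have hAK : K ≤ A := by
    rcases Nat.eq_zero_or_pos n with h | h
    · exfalso; rw [h] at hn; simp at hn; linarith
    · calc K = K ^ 1 := (pow_one K).symm
        _ ≤ K ^ n := pow_le_pow_right₀ hK.le h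
  refine ⟨2 * A ^ β, by positivity, ?_⟩
  intro x hx
  have hx0 : (0:ℝ) < x := lt_of_lt_of_le one_pos hx
  have hAx1 : 1 < A * x := by nlinarith
  have hAx0 : (0:ℝ) < A * x := lt_trans one_pos hAx1
  set u : ℝ := 1 / (A * x) with hu
  have hu0 : 0 < u := by positivity
  have hu1 : u < 1 := by rw [hu, div_lt_one hAx0]; exact hAx1
  have huK : u * K ≤ 1 := by
    rw [hu]
    rw [div_mul_eq_mul_div, div_le_one hAx0]
    nlinarith
  set t : ℝ := 1 - u with ht
  have ht0 : 0 < t := by simp only [ht]; linarith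
  have ht1 : t < 1 := by simp only [ht]; linarith
  -- splitting the integral
  have hsub1 : Set.Ioo (0:ℝ) t ⊆ Set.Ioo (0:ℝ) 1 := Set.Ioo_subset_Ioo_right ht1.le
  have hsub2 : Set.Ico t 1 ⊆ Set.Ioo (0:ℝ) 1 :=
    fun r hr => ⟨lt_of_lt_of_le ht0 hr.1, hr.2⟩
  have hdisj : Disjoint (Set.Ioo (0:ℝ) t) (Set.Ico t 1) := by
    rw [Set.disjoint_left]
    rintro r ⟨_, h1⟩ ⟨h2, _⟩
    exact absurd h1 (not_lt.mpr h2)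
  have hsplit : mom ω x = (∫ r in Set.Ioo (0:ℝ) t, r ^ x * ω r)
      + ∫ r in Set.Ico t 1, r ^ x * ω r := by
    rw [mom, ← Set.Ioo_union_Ico_eq_Ioo ht0 ht1.le]
    exact setIntegral_union hdisj measurableSet_Ico
      ((hIntx x (by linarith)).mono_set hsub1)
      ((hIntx x (by linarith)).mono_set hsub2)
  -- the tail estimate
  have hAx1' : (1:ℝ) ≤ A * x := hAx1.le
  have htail1 : (∫ r in Set.Ico t 1, r ^ x * ω r)
      ≤ t ^ ((1 - A) * x) * mom ω (A * x) := by
    have hstep : (∫ r in Set.Ico t 1, r ^ x * ω r)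
        ≤ ∫ r in Set.Ico t 1, t ^ ((1 - A) * x) * (r ^ (A * x) * ω r) := by
      apply setIntegral_mono_on
      · exact (hIntx x (by linarith)).mono_set hsub2
      · exact (((hIntx (A * x) (by linarith)).mono_set hsub2).const_mul _)
      · exact measurableSet_Ico
      · intro r hr
        have hr0 : 0 < r := lt_of_lt_of_le ht0 hr.1
        have hsplit2 : r ^ x = r ^ ((1 - A) * x) * r ^ (A * x) := by
          rw [← Real.rpow_add hr0]; ring_nf
        rw [hsplit2]
        have h2 : r ^ ((1 - A) * x) ≤ t ^ ((1 - A) * x) :=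
          Real.rpow_le_rpow_of_nonpos ht0 hr.1 (by nlinarith)
        have h3 : (0:ℝ) ≤ r ^ (A * x) * ω r :=
          mul_nonneg (Real.rpow_nonneg hr0.le _) (hω r (hsub2 hr))
        calc r ^ ((1 - A) * x) * r ^ (A * x) * ω r
            = r ^ ((1 - A) * x) * (r ^ (A * x) * ω r) := by ring
          _ ≤ t ^ ((1 - A) * x) * (r ^ (A * x) * ω r) :=
              mul_le_mul_of_nonneg_right h2 h3
    rw [integral_const_mul] at hstep
    refine le_trans hstep ?_
    apply mul_le_mul_of_nonneg_left _ (Real.rpow_nonneg ht0.le _)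
    apply setIntegral_mono_set (hIntx (A * x) (by linarith))
    · filter_upwards [ae_restrict_mem measurableSet_Ioo] with r hr
      exact mul_nonneg (Real.rpow_nonneg hr.1.le _) (hω r hr)
    · exact HasSubset.Subset.eventuallyLE hsub2
  -- bound `t ^ ((1-A)x) ≤ E`
  have hbd : t ^ ((1 - A) * x) ≤ E := by
    set v : ℝ := u / (1 - u) with hv
    have h1u : 0 < 1 - u := by linarith
    have hv0 : 0 ≤ v := le_of_lt (div_pos hu0 h1u)
    have hexp : Real.exp (-v) ≤ t := by
      have h1 : 1 + v ≤ Real.exp v := by linarith [Real.add_one_le_exp v]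
      have h2 : 1 / (1 - u) ≤ Real.exp v := by
        rw [div_le_iff₀ h1u]
        have : (1 + v) * (1 - u) = 1 := by
          rw [hv, add_mul, div_mul_cancel₀ _ h1u.ne']; ring
        nlinarith [Real.exp_pos v]
      rw [Real.exp_neg]
      rw [inv_le_comm₀ (Real.exp_pos v) ht0]
      calc t⁻¹ = 1 / (1 - u) := by rw [ht, inv_eq_one_div]
        _ ≤ Real.exp v := h2
    have hnonpos : (1 - A) * x ≤ 0 := by nlinarith
    have h3 : t ^ ((1 - A) * x) ≤ (Real.exp (-v)) ^ ((1 - A) * x) :=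
      Real.rpow_le_rpow_of_nonpos (Real.exp_pos _) hexp hnonpos
    refine le_trans h3 ?_
    rw [Real.rpow_def_of_pos (Real.exp_pos _), Real.log_exp, hE]
    apply Real.exp_le_exp.mpr
    have hu_eq : u * (A * x) = 1 := by
      rw [hu]; field_simp
    have key : v * ((A - 1) * x) ≤ K / (K - 1) := by
      rw [hv, div_mul_eq_mul_div, div_le_div_iff₀ h1u (by linarith : (0:ℝ) < K - 1)]
      nlinarith [mul_pos hu0 hx0]
    calc -v * ((1 - A) * x) = v * ((A - 1) * x) := by ring
      _ ≤ K / (K - 1) := key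
  -- tail is at most half of the moment
  have hCn : (0:ℝ) < C ^ n := pow_pos (by linarith) n
  have hmomAx : mom ω (A * x) ≤ mom ω x / C ^ n := by
    rw [le_div_iff₀ hCn]
    have h := hiter n x hx
    rw [← hA] at h
    linarith [h, mul_comm (mom ω (A * x)) (C ^ n)]
  have htail2 : (∫ r in Set.Ico t 1, r ^ x * ω r) ≤ 1 / 2 * mom ω x := by
    calc (∫ r in Set.Ico t 1, r ^ x * ω r)
        ≤ t ^ ((1 - A) * x) * mom ω (A * x) := htail1
      _ ≤ E * (mom ω x / C ^ n) := by
          apply mul_le_mul hbd hmomAx (hmomnn _) (by linarith)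
      _ ≤ 1 / 2 * mom ω x := by
          rw [← mul_div_assoc, div_le_iff₀ hCn]
          nlinarith [hmomnn x]
  have hhead : 1 / 2 * mom ω x ≤ ∫ r in Set.Ioo (0:ℝ) t, r ^ x * ω r := by
    linarith [hsplit, htail2]
  -- lower bound for the β-moment
  set I : ℝ := ∫ r in Set.Ioo (0:ℝ) 1, r ^ x * (1 - r) ^ β * ω r with hI
  have hI1 : (∫ r in Set.Ioo (0:ℝ) t, u ^ β * (r ^ x * ω r))
      ≤ ∫ r in Set.Ioo (0:ℝ) t, r ^ x * (1 - r) ^ β * ω r := by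
    apply setIntegral_mono_on
    · exact ((hIntx x (by linarith)).mono_set hsub1).const_mul _
    · exact (hIntβ x (by linarith)).mono_set hsub1
    · exact measurableSet_Ioo
    · intro r hr
      have hr1 : u ≤ 1 - r := by
        have := hr.2; simp only [ht] at this; linarith
      have h2 : u ^ β ≤ (1 - r) ^ β := Real.rpow_le_rpow hu0.le hr1 hβ.le
      have h3 : (0:ℝ) ≤ r ^ x * ω r :=
        mul_nonneg (Real.rpow_nonneg hr.1.le _) (hω r (hsub1 hr))
      calc u ^ β * (r ^ x * ω r) ≤ (1 - r) ^ β * (r ^ x * ω r) :=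
            mul_le_mul_of_nonneg_right h2 h3
        _ = r ^ x * (1 - r) ^ β * ω r := by ring
  have hI2 : (∫ r in Set.Ioo (0:ℝ) t, r ^ x * (1 - r) ^ β * ω r) ≤ I := by
    apply setIntegral_mono_set (hIntβ x (by linarith))
    · filter_upwards [ae_restrict_mem measurableSet_Ioo] with r hr
      exact mul_nonneg (mul_nonneg (Real.rpow_nonneg hr.1.le _)
        (Real.rpow_nonneg (by linarith [hr.2]) _)) (hω r hr)
    · exact HasSubset.Subset.eventuallyLE hsub1
  have hfin : u ^ β * (1 / 2 * mom ω x) ≤ I := by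
    calc u ^ β * (1 / 2 * mom ω x)
        ≤ u ^ β * ∫ r in Set.Ioo (0:ℝ) t, r ^ x * ω r :=
          mul_le_mul_of_nonneg_left hhead (Real.rpow_nonneg hu0.le _)
      _ = ∫ r in Set.Ioo (0:ℝ) t, u ^ β * (r ^ x * ω r) :=
          (integral_const_mul _ _).symm
      _ ≤ ∫ r in Set.Ioo (0:ℝ) t, r ^ x * (1 - r) ^ β * ω r := hI1
      _ ≤ I := hI2
  -- conclude
  have huβ : u ^ β = ((A * x) ^ β)⁻¹ := by
    rw [hu, one_div, ← Real.inv_rpow hAx0.le]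
  have hP : 0 < (A * x) ^ β := Real.rpow_pos_of_pos hAx0 β
  have hmulβ : (A * x) ^ β = A ^ β * x ^ β := Real.mul_rpow (by linarith) hx0.le
  have h5 := mul_le_mul_of_nonneg_left hfin hP.le
  have h6 : (A * x) ^ β * (u ^ β * (1 / 2 * mom ω x)) = 1 / 2 * mom ω x := by
    rw [huβ, ← mul_assoc, mul_inv_cancel₀ hP.ne', one_mul]
  rw [h6, hmulβ] at h5
  nlinarith [h5]
end

section
/- Let ω be a nonnegative integrable function on [0,1) with ω̂(r) > 0 for all r. If ω ∈ Ď, then ω ∈ M. That is, if there exist K > 1 and C > 1 such that ω̂(r) ≥ C·ω̂(1 − (1−r)/K) for all 0 ≤ r < 1, then there exist K' > 1 and C' > 1 such that ω_x ≥ C'·ω_{K'x} for all x ≥ 1. -/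
open MeasureTheory Set

section aux

variable {ω : ℝ → ℝ}

lemma aux_omega_int (hint : MeasureTheory.IntegrableOn ω (Set.Ico 0 1)) :
    MeasureTheory.IntegrableOn ω (Set.Ioo (0:ℝ) 1) :=
  hint.mono_set Set.Ioo_subset_Ico_self

lemma aux_mom_int (hint : MeasureTheory.IntegrableOn ω (Set.Ico 0 1)) {y : ℝ} (hy : 0 ≤ y) :
    MeasureTheory.IntegrableOn (fun r => r ^ y * ω r) (Set.Ioo (0:ℝ) 1) := by
  have h1 : MeasureTheory.IntegrableOn ω (Set.Ioo (0:ℝ) 1) := aux_omega_int hint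
  refine MeasureTheory.Integrable.mono h1 ?_ ?_
  · exact ((continuousOn_id.rpow_const fun r hr => Or.inl (ne_of_gt hr.1)).aestronglyMeasurable
      measurableSet_Ioo).mul h1.1
  · rw [MeasureTheory.ae_restrict_iff' measurableSet_Ioo]
    refine Filter.Eventually.of_forall fun r hr => ?_
    have h0 : (0:ℝ) ≤ r := hr.1.le
    have h2 : r ^ y ≤ 1 := Real.rpow_le_one h0 hr.2.le hy
    have h3 : 0 ≤ r ^ y := Real.rpow_nonneg h0 _
    rw [norm_mul, Real.norm_eq_abs, abs_of_nonneg h3]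
    nlinarith [norm_nonneg (ω r)]

lemma aux_mom_nonneg (hnn : ∀ r ∈ Set.Ico (0:ℝ) 1, 0 ≤ ω r) (y : ℝ) : 0 ≤ mom ω y := by
  refine MeasureTheory.setIntegral_nonneg measurableSet_Ioo fun r hr => ?_
  exact mul_nonneg (Real.rpow_nonneg hr.1.le _) (hnn r ⟨hr.1.le, hr.2⟩)

lemma aux_tail_mono (hnn : ∀ r ∈ Set.Ico (0:ℝ) 1, 0 ≤ ω r)
    (hint : MeasureTheory.IntegrableOn ω (Set.Ico 0 1))
    {a b : ℝ} (ha : 0 ≤ a) (hab : a ≤ b) : tailInt ω b ≤ tailInt ω a := by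
  refine MeasureTheory.setIntegral_mono_set
    (hint.mono_set fun r hr => ⟨le_trans ha hr.1.le, hr.2⟩) ?_ ?_
  · filter_upwards [MeasureTheory.ae_restrict_mem measurableSet_Ioo] with r hr
    exact hnn r ⟨le_trans ha hr.1.le, hr.2⟩
  · exact Filter.Eventually.of_forall (Set.Ioo_subset_Ioo hab le_rfl)

end aux

set_option maxHeartbeats 1000000 in
/-- The class Ď is contained in the class M. -/
theorem Dd_subset_M (ω : ℝ → ℝ)
    (hnn : ∀ r ∈ Set.Ico (0:ℝ) 1, 0 ≤ ω r)
    (hint : MeasureTheory.IntegrableOn ω (Set.Ico 0 1))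
    (hpos : ∀ r ∈ Set.Ico (0:ℝ) 1, 0 < tailInt ω r)
    (hDd : ∃ K > (1:ℝ), ∃ C > (1:ℝ), ∀ r ∈ Set.Ico (0:ℝ) 1,
      C * tailInt ω (1 - (1 - r) / K) ≤ tailInt ω r) :
    ∃ C' > (1:ℝ), ∃ K' > (1:ℝ), ∀ x : ℝ, 1 ≤ x → C' * mom ω (K' * x) ≤ mom ω x := by
  obtain ⟨K, hK, C, hC, hDd⟩ := hDd
  -- iterated Ď inequality
  have hiter : ∀ n : ℕ, ∀ r ∈ Set.Ico (0:ℝ) 1,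
      C ^ n * tailInt ω (1 - (1 - r) / K ^ n) ≤ tailInt ω r := by
    intro n
    induction n with
    | zero => intro r hr; simp
    | succ n ih =>
      intro r hr
      have hKn : (1:ℝ) ≤ K ^ n := one_le_pow₀ hK.le
      have hr1 : 0 < 1 - r := by linarith [hr.2]
      have hq1 : (1 - r) / K ^ n ≤ 1 := by
        rw [div_le_one (by linarith)]
        nlinarith [hr.1]
      have hq2 : 0 < (1 - r) / K ^ n := div_pos hr1 (by linarith)
      have hmem : (1 - (1 - r) / K ^ n) ∈ Set.Ico (0:ℝ) 1 := ⟨by linarith, by linarith⟩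
      have h2 := hDd _ hmem
      have heq : 1 - (1 - (1 - (1 - r) / K ^ n)) / K = 1 - (1 - r) / K ^ (n + 1) := by
        rw [pow_succ]
        field_simp
        ring
      rw [heq] at h2
      have h3 := ih r hr
      have hCn : (0:ℝ) < C ^ n := pow_pos (by linarith) n
      calc C ^ (n+1) * tailInt ω (1 - (1 - r) / K ^ (n+1))
          = C ^ n * (C * tailInt ω (1 - (1 - r) / K ^ (n+1))) := by ring
        _ ≤ C ^ n * tailInt ω (1 - (1 - r) / K ^ n) := by
            exact mul_le_mul_of_nonneg_left h2 hCn.le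
        _ ≤ tailInt ω r := h3
  obtain ⟨n, hn⟩ := pow_unbounded_of_one_lt (4 * Real.exp 1) hC
  set Kn : ℝ := K ^ n with hKn_def
  have hKn1 : (1:ℝ) ≤ Kn := one_le_pow₀ hK.le
  refine ⟨2, one_lt_two, 1 + 4 * Kn, by linarith, ?_⟩
  intro x hx
  have hx0 : (0:ℝ) < x := by linarith
  set t : ℝ := 1 / (2 * x) with ht_def
  have ht0 : 0 < t := by positivity
  have ht2 : t ≤ 1 / 2 := by
    rw [ht_def, div_le_div_iff₀ (by linarith) (by norm_num)]
    linarith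
  have htx : t * x = 1 / 2 := by
    rw [ht_def]; field_simp
  set r1 : ℝ := 1 - t with hr1_def
  set r0 : ℝ := 1 - t / Kn with hr0_def
  clear_value t
  have hr1mem : r1 ∈ Set.Ico (0:ℝ) 1 := ⟨by rw [hr1_def]; linarith, by rw [hr1_def]; linarith⟩
  have htKn : 0 < t / Kn := div_pos ht0 (by linarith)
  have htKn2 : t / Kn ≤ t := by
    rw [div_le_iff₀ (by linarith)]; nlinarith
  clear_value r1 r0
  have hr0half : 1/2 ≤ r0 := by rw [hr0_def]; linarith
  have hr0lt : r0 < 1 := by rw [hr0_def]; linarith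
  have hr0mem : r0 ∈ Set.Ico (0:ℝ) 1 := ⟨by linarith, hr0lt⟩
  have hr0pos : (0:ℝ) < r0 := by linarith
  -- Step A : tailInt ω r1 ≤ exp 1 * mom ω x
  have hexpr1 : Real.exp (-(2*t)) ≤ r1 := by
    have h1 : 2*t + 1 ≤ Real.exp (2*t) := Real.add_one_le_exp (2*t)
    have h2 : Real.exp (-(2*t)) = (Real.exp (2*t))⁻¹ := by
      rw [Real.exp_neg]
    rw [h2, inv_le_iff_one_le_mul₀ (Real.exp_pos _)]
    nlinarith [Real.exp_pos (2*t)]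
  have hr1x : Real.exp (-1) ≤ r1 ^ x := by
    have h1 : Real.exp (-(2*t)) ^ x ≤ r1 ^ x :=
      Real.rpow_le_rpow (Real.exp_pos _).le hexpr1 hx0.le
    have h2 : Real.exp (-(2*t)) ^ x = Real.exp (-1) := by
      rw [← Real.exp_mul]
      congr 1
      rw [neg_mul]
      rw [mul_comm (2*t) x]
      nlinarith
    linarith [h1, h2.symm.le]
  have hstepA : tailInt ω r1 ≤ Real.exp 1 * mom ω x := by
    have hIoosub : Set.Ioo r1 1 ⊆ Set.Ioo (0:ℝ) 1 :=
      Set.Ioo_subset_Ioo (by linarith) le_rfl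
    have hi1 : MeasureTheory.IntegrableOn (fun r => r ^ x * ω r) (Set.Ioo r1 1) :=
      (aux_mom_int hint hx0.le).mono_set hIoosub
    have hi2 : MeasureTheory.IntegrableOn (fun r => r1 ^ x * ω r) (Set.Ioo r1 1) := by
      exact ((aux_omega_int hint).mono_set hIoosub).const_mul _
    have h1 : r1 ^ x * tailInt ω r1 = ∫ r in Set.Ioo r1 1, r1 ^ x * ω r := by
      rw [tailInt, MeasureTheory.integral_const_mul]
    have h2 : (∫ r in Set.Ioo r1 1, r1 ^ x * ω r) ≤ ∫ r in Set.Ioo r1 1, r ^ x * ω r := by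
      refine MeasureTheory.setIntegral_mono_on hi2 hi1 measurableSet_Ioo fun r hr => ?_
      have hω : 0 ≤ ω r := hnn r ⟨by linarith [hr.1, hr1mem.1], hr.2⟩
      have : r1 ^ x ≤ r ^ x := Real.rpow_le_rpow hr1mem.1 hr.1.le hx0.le
      nlinarith
    have h3 : (∫ r in Set.Ioo r1 1, r ^ x * ω r) ≤ mom ω x := by
      refine MeasureTheory.setIntegral_mono_set (aux_mom_int hint hx0.le) ?_
        (Filter.Eventually.of_forall hIoosub)
      filter_upwards [MeasureTheory.ae_restrict_mem measurableSet_Ioo] with r hr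
      exact mul_nonneg (Real.rpow_nonneg hr.1.le _) (hnn r ⟨hr.1.le, hr.2⟩)
    have h4 : r1 ^ x * tailInt ω r1 ≤ mom ω x := by
      rw [h1]; exact le_trans h2 h3
    have htail0 : 0 ≤ tailInt ω r1 := (hpos r1 hr1mem).le
    have h5 : Real.exp (-1) * tailInt ω r1 ≤ mom ω x := by
      calc Real.exp (-1) * tailInt ω r1 ≤ r1 ^ x * tailInt ω r1 :=
            mul_le_mul_of_nonneg_right hr1x htail0
        _ ≤ mom ω x := h4
    have hexp : Real.exp (-1) * Real.exp 1 = 1 := by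
      rw [← Real.exp_add]; norm_num
    nlinarith [Real.exp_pos (1:ℝ), mul_le_mul_of_nonneg_left h5 (Real.exp_pos (1:ℝ)).le]
  -- Step C : tailInt ω r0 ≤ (C^n)⁻¹ * tailInt ω r1
  have hstepC : C ^ n * tailInt ω r0 ≤ tailInt ω r1 := by
    have := hiter n r1 hr1mem
    have heq : 1 - (1 - r1) / K ^ n = r0 := by
      rw [hr1_def, hr0_def, hKn_def]; ring_nf
    rwa [heq] at this
  -- Step B : mom ω ((1 + 4*Kn) * x) ≤ exp (-2) * mom ω x + tailInt ω r0
  have hstepB : mom ω ((1 + 4 * Kn) * x) ≤ Real.exp (-2) * mom ω x + tailInt ω r0 := by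
    set y : ℝ := (1 + 4 * Kn) * x with hy_def
    have hy0 : 0 < y := by positivity
    have hsplit : Set.Ioo (0:ℝ) 1 = Set.Ioo 0 r0 ∪ Set.Ico r0 1 :=
      (Set.Ioo_union_Ico_eq_Ioo hr0pos hr0mem.2.le).symm
    have hiy : MeasureTheory.IntegrableOn (fun r => r ^ y * ω r) (Set.Ioo (0:ℝ) 1) :=
      aux_mom_int hint hy0.le
    have hd : Disjoint (Set.Ioo (0:ℝ) r0) (Set.Ico r0 1) := by
      apply Set.disjoint_left.2
      intro a ha ha2
      exact absurd ha2.1 (not_le.2 ha.2)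
    have hsub1 : Set.Ioo (0:ℝ) r0 ⊆ Set.Ioo (0:ℝ) 1 :=
      Set.Ioo_subset_Ioo le_rfl hr0mem.2.le
    have hsub2 : Set.Ico r0 (1:ℝ) ⊆ Set.Ioo (0:ℝ) 1 := fun a ha =>
      ⟨lt_of_lt_of_le hr0pos ha.1, ha.2⟩
    have hmomsplit : mom ω y = (∫ r in Set.Ioo 0 r0, r ^ y * ω r)
        + ∫ r in Set.Ico r0 1, r ^ y * ω r := by
      rw [mom, hsplit]
      exact MeasureTheory.setIntegral_union hd measurableSet_Ico
        (hiy.mono_set hsub1) (hiy.mono_set hsub2)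
    -- part 1
    have hr0exp : r0 ≤ Real.exp (-(t/Kn)) := by
      have := Real.add_one_le_exp (-(t/Kn))
      linarith
    have hr0pow : r0 ^ (4 * Kn * x) ≤ Real.exp (-2) := by
      have h1 : r0 ^ (4 * Kn * x) ≤ Real.exp (-(t/Kn)) ^ (4 * Kn * x) :=
        Real.rpow_le_rpow hr0pos.le hr0exp (by positivity)
      have h2 : Real.exp (-(t/Kn)) ^ (4 * Kn * x) = Real.exp (-(t/Kn) * (4 * Kn * x)) :=
        (Real.exp_mul _ _).symm
      have h3 : -(t/Kn) * (4 * Kn * x) = -2 := by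
        field_simp
        nlinarith
      rw [h2, h3] at h1
      exact h1
    have hpart1 : (∫ r in Set.Ioo 0 r0, r ^ y * ω r)
        ≤ Real.exp (-2) * mom ω x := by
      have ha : (∫ r in Set.Ioo 0 r0, r ^ y * ω r)
          ≤ ∫ r in Set.Ioo 0 r0, Real.exp (-2) * (r ^ x * ω r) := by
        refine MeasureTheory.setIntegral_mono_on (hiy.mono_set hsub1)
          (((aux_mom_int hint hx0.le).mono_set hsub1).const_mul _)
          measurableSet_Ioo fun r hr => ?_
        have hω : 0 ≤ ω r := hnn r ⟨hr.1.le, lt_of_lt_of_le hr.2 hr0mem.2.le⟩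
        have hry : r ^ y = r ^ (4 * Kn * x) * r ^ x := by
          rw [← Real.rpow_add hr.1]
          congr 1
          rw [hy_def]; ring
        have h4 : r ^ (4 * Kn * x) ≤ r0 ^ (4 * Kn * x) :=
          Real.rpow_le_rpow hr.1.le hr.2.le (by positivity)
        have h5 : r ^ (4 * Kn * x) ≤ Real.exp (-2) := le_trans h4 hr0pow
        have h6 : 0 ≤ r ^ x := Real.rpow_nonneg hr.1.le _
        rw [hry]
        calc r ^ (4 * Kn * x) * r ^ x * ω r = r ^ (4 * Kn * x) * (r ^ x * ω r) := by ring
          _ ≤ Real.exp (-2) * (r ^ x * ω r) :=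
              mul_le_mul_of_nonneg_right h5 (mul_nonneg h6 hω)
      have hb : (∫ r in Set.Ioo 0 r0, Real.exp (-2) * (r ^ x * ω r))
          = Real.exp (-2) * ∫ r in Set.Ioo 0 r0, r ^ x * ω r :=
        MeasureTheory.integral_const_mul _ _
      have hc : (∫ r in Set.Ioo 0 r0, r ^ x * ω r) ≤ mom ω x := by
        refine MeasureTheory.setIntegral_mono_set (aux_mom_int hint hx0.le) ?_
          (Filter.Eventually.of_forall hsub1)
        filter_upwards [MeasureTheory.ae_restrict_mem measurableSet_Ioo] with r hr
        exact mul_nonneg (Real.rpow_nonneg hr.1.le _) (hnn r ⟨hr.1.le, hr.2⟩)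
      calc (∫ r in Set.Ioo 0 r0, r ^ y * ω r)
          ≤ Real.exp (-2) * ∫ r in Set.Ioo 0 r0, r ^ x * ω r := by rw [← hb]; exact ha
        _ ≤ Real.exp (-2) * mom ω x :=
            mul_le_mul_of_nonneg_left hc (Real.exp_pos _).le
    -- part 2
    have hpart2 : (∫ r in Set.Ico r0 1, r ^ y * ω r) ≤ tailInt ω r0 := by
      have ha : (∫ r in Set.Ico r0 1, r ^ y * ω r) ≤ ∫ r in Set.Ico r0 1, ω r := by
        refine MeasureTheory.setIntegral_mono_on (hiy.mono_set hsub2)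
          (hint.mono_set fun a ha => ⟨le_trans hr0pos.le ha.1, ha.2⟩)
          measurableSet_Ico fun r hr => ?_
        have hω : 0 ≤ ω r := hnn r ⟨le_trans hr0pos.le hr.1, hr.2⟩
        have h1 : r ^ y ≤ 1 :=
          Real.rpow_le_one (le_trans hr0pos.le hr.1) hr.2.le hy0.le
        have h2 : 0 ≤ r ^ y := Real.rpow_nonneg (le_trans hr0pos.le hr.1) _
        nlinarith
      have hb : (∫ r in Set.Ico r0 1, ω r) = tailInt ω r0 :=
        MeasureTheory.integral_Ico_eq_integral_Ioo
      linarith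
    rw [hmomsplit]
    linarith
  -- combine
  have hCn4e : 4 * Real.exp 1 < C ^ n := hn
  have hCnpos : (0:ℝ) < C ^ n := pow_pos (by linarith) n
  have htail0 : 0 ≤ tailInt ω r0 := (hpos r0 hr0mem).le
  have hmomx : 0 ≤ mom ω x := aux_mom_nonneg hnn x
  have hC1 : tailInt ω r0 ≤ Real.exp 1 * mom ω x / C ^ n := by
    rw [le_div_iff₀ hCnpos]
    nlinarith
  have hC2 : Real.exp 1 * mom ω x / C ^ n ≤ mom ω x / 4 := by
    rw [div_le_div_iff₀ hCnpos (by norm_num)]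
    nlinarith [Real.exp_pos (1:ℝ)]
  have hexp2 : Real.exp (-2) ≤ 1 / 4 := by
    have h1 : (2:ℝ) ≤ Real.exp 1 := by nlinarith [Real.add_one_le_exp (1:ℝ)]
    have h2 : (4:ℝ) ≤ Real.exp 2 := by
      have : Real.exp 2 = Real.exp 1 * Real.exp 1 := by
        rw [← Real.exp_add]; norm_num
      nlinarith
    have h3 : Real.exp (-2) = (Real.exp 2)⁻¹ := by rw [Real.exp_neg]
    rw [h3, inv_le_comm₀ (Real.exp_pos _) (by norm_num)]
    norm_num
    linarith
  have hfinal : mom ω ((1 + 4 * Kn) * x) ≤ mom ω x / 2 := by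
    have : Real.exp (-2) * mom ω x ≤ mom ω x / 4 := by nlinarith [Real.exp_pos (-2:ℝ)]
    linarith
  linarith
end

section
/- Let ω be a nonnegative integrable function on [0,1) with ω̂(r) > 0 for all r. Suppose that for some β > 0 and constant C > 0 one has x^β·(ω_{[β]})_x ≤ C·ω_x for all x ≥ 0 (equivalently, the moment condition x^q ∫_0^1 r^{qx}(1−r)^q ω(r) dr ≤ C^q ω_{qx} with q = β). Then ω ∈ D̂: there exists C' ≥ 1 such that ω̂(r) ≤ C'·ω̂((1+r)/2) for all 0 ≤ r < 1. -/
open MeasureTheory Set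

/-- Integrability of `g·ω` on `(0,1)` when `0 ≤ g ≤ 1` there. -/
lemma integrableOn_mul_aux (ω : ℝ → ℝ)
    (hint : MeasureTheory.IntegrableOn ω (Set.Ico 0 1)) (g : ℝ → ℝ) (hg : Measurable g)
    (hb : ∀ r ∈ Set.Ioo (0:ℝ) 1, 0 ≤ g r ∧ g r ≤ 1) :
    MeasureTheory.IntegrableOn (fun r => g r * ω r) (Set.Ioo 0 1) := by
  have h1 : IntegrableOn ω (Set.Ioo 0 1) := hint.mono_set Set.Ioo_subset_Ico_self
  refine h1.abs.mono' (hg.aestronglyMeasurable.mul h1.aestronglyMeasurable) ?_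
  filter_upwards [ae_restrict_mem measurableSet_Ioo] with r hr
  obtain ⟨h0, hle⟩ := hb r hr
  have habs : ‖g r * ω r‖ = |g r| * |ω r| := abs_mul _ _
  rw [habs, abs_of_nonneg h0]
  nlinarith [abs_nonneg (ω r)]

set_option maxHeartbeats 2000000 in
/-- If `x^β (ω_[β])_x ≤ C ω_x` for all `x ≥ 0` and some `β > 0`, then `ω ∈ D̂`. -/
theorem moment_condition_implies_Dhat (ω : ℝ → ℝ)
    (hnn : ∀ r ∈ Set.Ico (0:ℝ) 1, 0 ≤ ω r)
    (hint : MeasureTheory.IntegrableOn ω (Set.Ico 0 1))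
    (hpos : ∀ r ∈ Set.Ico (0:ℝ) 1, 0 < tailInt ω r)
    (β C : ℝ) (hβ : 0 < β) (hC : 0 < C)
    (h : ∀ x : ℝ, 0 ≤ x →
      x ^ β * (∫ r in Set.Ioo (0:ℝ) 1, r ^ x * (1 - r) ^ β * ω r) ≤ C * mom ω x) :
    ∃ C' : ℝ, 1 ≤ C' ∧ ∀ r ∈ Set.Ico (0:ℝ) 1,
      tailInt ω r ≤ C' * tailInt ω ((1 + r) / 2) := by
  -- basic integrability and nonnegativity facts
  have hωIoo : IntegrableOn ω (Set.Ioo 0 1) := hint.mono_set Set.Ioo_subset_Ico_self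
  have hnn' : ∀ a b : ℝ, 0 ≤ a → b ≤ 1 →
      ∀ᵐ r ∂(volume.restrict (Set.Ioo a b)), 0 ≤ ω r := by
    intro a b ha hb
    filter_upwards [ae_restrict_mem measurableSet_Ioo] with r hr
    exact hnn r ⟨le_of_lt (lt_of_le_of_lt ha hr.1), lt_of_lt_of_le hr.2 hb⟩
  -- tail integral over Ico
  have tail_Ico : ∀ t : ℝ, tailInt ω t = ∫ r in Set.Ico t 1, ω r := by
    intro t
    exact setIntegral_congr_set Ioo_ae_eq_Ico
  -- antitonicity of tail integral
  have tail_anti : ∀ a b : ℝ, 0 ≤ a → a ≤ b → tailInt ω b ≤ tailInt ω a := by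
    intro a b ha hab
    refine setIntegral_mono_set (hωIoo.mono_set ?_) (hnn' a 1 ha le_rfl) ?_
    · exact Set.Ioo_subset_Ioo ha le_rfl
    · exact HasSubset.Subset.eventuallyLE (Set.Ioo_subset_Ioo hab le_rfl)
  -- splitting of tail integral
  have tail_split : ∀ a b : ℝ, 0 ≤ a → a < b → b < 1 →
      tailInt ω a = (∫ r in Set.Ioo a b, ω r) + tailInt ω b := by
    intro a b ha hab hb1
    have hu : Set.Ioo a b ∪ Set.Ico b 1 = Set.Ioo a 1 :=
      Set.Ioo_union_Ico_eq_Ioo hab hb1.le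
    have hd : Disjoint (Set.Ioo a b) (Set.Ico b 1) := by
      refine Set.disjoint_left.2 fun r hr hr' => ?_
      exact absurd hr.2 (not_lt.2 hr'.1)
    have hi1' : IntegrableOn ω (Set.Ioo a b) := by
      refine hint.mono_set ?_
      intro r hr; exact ⟨le_of_lt (lt_of_le_of_lt ha hr.1), lt_of_lt_of_le hr.2 hb1.le⟩
    have hi2 : IntegrableOn ω (Set.Ico b 1) := by
      refine hint.mono_set ?_
      intro r hr; exact ⟨le_trans (le_trans ha hab.le) hr.1, hr.2⟩
    have := setIntegral_union hd measurableSet_Ico hi1' hi2 (f := ω) (μ := volume)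
    rw [tailInt, ← hu, this, tail_Ico b]
  -- the constant
  set K : ℝ := (2 * C) ^ (1 / β) with hKdef
  clear_value K
  have hKpos : 0 < K := hKdef ▸ Real.rpow_pos_of_pos (by linarith) _
  have h34 : (3/4 : ℝ) ∈ Set.Ico (0:ℝ) 1 := by norm_num
  have hT34 : 0 < tailInt ω (3/4) := hpos _ h34
  refine ⟨max (1 + Real.exp (4 * K)) (tailInt ω 0 / tailInt ω (3/4)), ?_, ?_⟩
  · exact le_max_of_le_left (by nlinarith [Real.exp_pos (4 * K)])
  intro s hs
  set C' : ℝ := max (1 + Real.exp (4 * K)) (tailInt ω 0 / tailInt ω (3/4)) with hC'def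
  clear_value C'
  set t : ℝ := (1 + s) / 2 with htdef
  clear_value t
  have hs0 : 0 ≤ s := hs.1
  have hs1 : s < 1 := hs.2
  have hst : s < t := by rw [htdef]; linarith
  have ht1 : t < 1 := by rw [htdef]; linarith
  have ht0 : 0 < t := by rw [htdef]; linarith
  have hTt : 0 < tailInt ω t := hpos t ⟨ht0.le, ht1⟩
  by_cases hcase : s ≤ 1/2
  · -- easy case: s ≤ 1/2, use positivity at 3/4
    have h1 : tailInt ω s ≤ tailInt ω 0 := tail_anti 0 s le_rfl hs0
    have h2 : tailInt ω (3/4) ≤ tailInt ω t := by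
      refine tail_anti t (3/4) ht0.le ?_
      rw [htdef]; linarith
    have h3 : tailInt ω 0 / tailInt ω (3/4) ≤ C' := hC'def ▸ le_max_right _ _
    have h4 : tailInt ω 0 = (tailInt ω 0 / tailInt ω (3/4)) * tailInt ω (3/4) := by
      field_simp
    calc tailInt ω s ≤ tailInt ω 0 := h1
      _ = (tailInt ω 0 / tailInt ω (3/4)) * tailInt ω (3/4) := h4
      _ ≤ C' * tailInt ω t := by
          have hrat : 0 ≤ tailInt ω 0 / tailInt ω (3/4) := by
            have := hpos 0 (by norm_num)
            positivity
          nlinarith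
  · -- main case: 1/2 < s < 1
    push_neg at hcase
    have hs0' : 0 < s := by linarith
    set x : ℝ := 2 * K / (1 - s) with hxdef
    clear_value x
    have h1s : 0 < 1 - s := by linarith
    have hxpos : 0 < x := by rw [hxdef]; exact div_pos (by linarith) h1s
    have h1t : 1 - t = (1 - s) / 2 := by rw [htdef]; try ring
    -- x^β (1-t)^β = 2C
    have hxt : x * (1 - t) = K := by
      rw [hxdef, h1t]; field_simp; try ring
    have hxβ : x ^ β * (1 - t) ^ β = 2 * C := by
      rw [← Real.mul_rpow hxpos.le (by linarith : (0:ℝ) ≤ 1 - t), hxt, hKdef,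
        one_div, Real.rpow_inv_rpow (by linarith) hβ.ne']
    -- integrability
    have Ix : IntegrableOn (fun r => r ^ x * ω r) (Set.Ioo 0 1) := by
      refine integrableOn_mul_aux ω hint _ (by fun_prop) fun r hr => ?_
      exact ⟨Real.rpow_nonneg hr.1.le _, Real.rpow_le_one hr.1.le hr.2.le hxpos.le⟩
    have Iβ : IntegrableOn (fun r => r ^ x * (1 - r) ^ β * ω r) (Set.Ioo 0 1) := by
      have hbb : ∀ r ∈ Set.Ioo (0:ℝ) 1, 0 ≤ r ^ x * (1 - r) ^ β ∧ r ^ x * (1 - r) ^ β ≤ 1 := by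
        intro r hr
        have hn1 : (0:ℝ) ≤ r ^ x := Real.rpow_nonneg hr.1.le _
        have hn2 : (0:ℝ) ≤ (1 - r) ^ β :=
          Real.rpow_nonneg (by linarith [hr.2] : (0:ℝ) ≤ 1 - r) _
        have h1 := Real.rpow_le_one hr.1.le hr.2.le hxpos.le
        have h2 := Real.rpow_le_one (by linarith [hr.2] : (0:ℝ) ≤ 1 - r)
          (by linarith [hr.1] : 1 - r ≤ 1) hβ.le
        exact ⟨mul_nonneg hn1 hn2, by nlinarith⟩
      have := integrableOn_mul_aux ω hint (fun r => r ^ x * (1 - r) ^ β)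
        (by fun_prop) hbb
      simpa [mul_assoc] using this
    -- abbreviation
    set A : ℝ := ∫ r in Set.Ioo (0:ℝ) t, r ^ x * ω r with hAdef
    clear_value A
    have hxωnn : ∀ᵐ r ∂(volume.restrict (Set.Ioo (0:ℝ) 1)),
        0 ≤ r ^ x * ω r := by
      filter_upwards [ae_restrict_mem measurableSet_Ioo] with r hr
      exact mul_nonneg (Real.rpow_nonneg hr.1.le _) (hnn r ⟨hr.1.le, hr.2⟩)
    have hAnn : 0 ≤ A := by
      rw [hAdef]
      refine setIntegral_nonneg measurableSet_Ioo fun r hr => ?_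
      exact mul_nonneg (Real.rpow_nonneg hr.1.le _)
        (hnn r ⟨hr.1.le, lt_trans hr.2 ht1⟩)
    -- Step B1: (1-t)^β * A ≤ ∫_{Ioo 0 t} r^x (1-r)^β ω
    have hB1 : (1 - t) ^ β * A ≤ ∫ r in Set.Ioo (0:ℝ) t, r ^ x * (1 - r) ^ β * ω r := by
      rw [hAdef, ← integral_const_mul]
      refine setIntegral_mono_on ((Ix.mono_set (Set.Ioo_subset_Ioo le_rfl ht1.le)).const_mul _)
        (Iβ.mono_set (Set.Ioo_subset_Ioo le_rfl ht1.le)) measurableSet_Ioo fun r hr => ?_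
      have hω : 0 ≤ ω r := hnn r ⟨hr.1.le, lt_trans hr.2 ht1⟩
      have hrx : 0 ≤ r ^ x := Real.rpow_nonneg hr.1.le _
      have hle : (1 - t) ^ β ≤ (1 - r) ^ β :=
        Real.rpow_le_rpow (by linarith) (by linarith [hr.2]) hβ.le
      calc (1 - t) ^ β * (r ^ x * ω r) = (r ^ x * ω r) * (1 - t) ^ β := by ring
        _ ≤ (r ^ x * ω r) * (1 - r) ^ β := by
            exact mul_le_mul_of_nonneg_left hle (mul_nonneg hrx hω)
        _ = r ^ x * (1 - r) ^ β * ω r := by ring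
    -- Step B2
    have hB2 : (∫ r in Set.Ioo (0:ℝ) t, r ^ x * (1 - r) ^ β * ω r)
        ≤ ∫ r in Set.Ioo (0:ℝ) 1, r ^ x * (1 - r) ^ β * ω r := by
      refine setIntegral_mono_set Iβ ?_ (HasSubset.Subset.eventuallyLE
        (Set.Ioo_subset_Ioo le_rfl ht1.le))
      filter_upwards [ae_restrict_mem measurableSet_Ioo] with r hr
      have hω : 0 ≤ ω r := hnn r ⟨hr.1.le, hr.2⟩
      have h2 : (0:ℝ) ≤ (1 - r) ^ β := Real.rpow_nonneg (by linarith [hr.2]) _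
      exact mul_nonneg (mul_nonneg (Real.rpow_nonneg hr.1.le _) h2) hω
    -- hypothesis
    have hh := h x hxpos.le
    -- Step B4: mom ω x ≤ A + tailInt ω t
    have hmom : mom ω x ≤ A + tailInt ω t := by
      have hu : Set.Ioo (0:ℝ) t ∪ Set.Ico t 1 = Set.Ioo (0:ℝ) 1 :=
        Set.Ioo_union_Ico_eq_Ioo ht0 ht1.le
      have hd : Disjoint (Set.Ioo (0:ℝ) t) (Set.Ico t 1) :=
        Set.disjoint_left.2 fun r hr hr' => absurd hr.2 (not_lt.2 hr'.1)
      have hi1 : IntegrableOn (fun r => r ^ x * ω r) (Set.Ioo 0 t) :=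
        Ix.mono_set (Set.Ioo_subset_Ioo le_rfl ht1.le)
      have hi2 : IntegrableOn (fun r => r ^ x * ω r) (Set.Ico t 1) :=
        Ix.mono_set (fun r hr => ⟨lt_of_lt_of_le ht0 hr.1, hr.2⟩)
      have hsplit : mom ω x = A + ∫ r in Set.Ico t 1, r ^ x * ω r := by
        rw [mom, ← hu, setIntegral_union hd measurableSet_Ico hi1 hi2, ← hAdef]
      rw [hsplit]
      refine add_le_add_right ?_ A
      rw [tail_Ico t]
      refine setIntegral_mono_on hi2 (hint.mono_set fun r hr =>
        ⟨le_trans ht0.le hr.1, hr.2⟩) measurableSet_Ico fun r hr => ?_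
      have hω : 0 ≤ ω r := hnn r ⟨le_trans ht0.le hr.1, hr.2⟩
      have hrx : r ^ x ≤ 1 :=
        Real.rpow_le_one (le_trans ht0.le hr.1) hr.2.le hxpos.le
      nlinarith
    -- combine to get A ≤ tailInt ω t
    have hA_le : A ≤ tailInt ω t := by
      have hc1 : 2 * C * A ≤ C * mom ω x := by
        calc 2 * C * A = x ^ β * ((1 - t) ^ β * A) := by rw [← hxβ]; ring
          _ ≤ x ^ β * (∫ r in Set.Ioo (0:ℝ) t, r ^ x * (1 - r) ^ β * ω r) :=
              mul_le_mul_of_nonneg_left hB1 (Real.rpow_nonneg hxpos.le _)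
          _ ≤ x ^ β * (∫ r in Set.Ioo (0:ℝ) 1, r ^ x * (1 - r) ^ β * ω r) :=
              mul_le_mul_of_nonneg_left hB2 (Real.rpow_nonneg hxpos.le _)
          _ ≤ C * mom ω x := hh
      have hc2 : C * mom ω x ≤ C * (A + tailInt ω t) :=
        mul_le_mul_of_nonneg_left hmom hC.le
      nlinarith
    -- Step C: s^x * (tailInt ω s - tailInt ω t) ≤ A
    have hsplit_s : tailInt ω s = (∫ r in Set.Ioo s t, ω r) + tailInt ω t :=
      tail_split s t hs0 hst ht1
    have hD : ∫ r in Set.Ioo s t, ω r ≥ 0 :=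
      setIntegral_nonneg measurableSet_Ioo fun r hr =>
        hnn r ⟨le_trans hs0 hr.1.le, lt_trans hr.2 ht1⟩
    have hC1 : s ^ x * (∫ r in Set.Ioo s t, ω r) ≤ A := by
      have hIst : IntegrableOn (fun r => r ^ x * ω r) (Set.Ioo s t) :=
        Ix.mono_set (Set.Ioo_subset_Ioo hs0 ht1.le)
      have step1 : s ^ x * (∫ r in Set.Ioo s t, ω r)
          ≤ ∫ r in Set.Ioo s t, r ^ x * ω r := by
        rw [← integral_const_mul]
        refine setIntegral_mono_on ((hint.mono_set fun r hr =>
          ⟨le_trans hs0 hr.1.le, lt_trans hr.2 ht1⟩).const_mul _) hIst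
          measurableSet_Ioo fun r hr => ?_
        have hω : 0 ≤ ω r := hnn r ⟨le_trans hs0 hr.1.le, lt_trans hr.2 ht1⟩
        have hrx : s ^ x ≤ r ^ x := Real.rpow_le_rpow hs0 hr.1.le hxpos.le
        exact mul_le_mul_of_nonneg_right hrx hω
      have step2 : (∫ r in Set.Ioo s t, r ^ x * ω r) ≤ A := by
        rw [hAdef]
        refine setIntegral_mono_set (Ix.mono_set (Set.Ioo_subset_Ioo le_rfl ht1.le)) ?_
          (HasSubset.Subset.eventuallyLE (Set.Ioo_subset_Ioo hs0 le_rfl))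
        filter_upwards [ae_restrict_mem measurableSet_Ioo] with r hr
        exact mul_nonneg (Real.rpow_nonneg hr.1.le _)
          (hnn r ⟨hr.1.le, lt_trans hr.2 ht1⟩)
      linarith
    -- Step D: exp(-(4K)) ≤ s^x
    have hsx : Real.exp (-(4 * K)) ≤ s ^ x := by
      rw [Real.rpow_def_of_pos hs0']
      apply Real.exp_le_exp.2
      have hlog : Real.log (1/s) ≤ 1/s - 1 := Real.log_le_sub_one_of_pos (by positivity)
      have hlog2 : -Real.log s ≤ (1 - s) / s := by
        rw [← Real.log_inv]
        have : (1:ℝ)/s - 1 = (1 - s)/s := by field_simp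
        calc Real.log s⁻¹ = Real.log (1/s) := by rw [one_div]
          _ ≤ 1/s - 1 := hlog
          _ = (1 - s)/s := this
      have hlog3 : -Real.log s ≤ 2 * (1 - s) := by
        have h2s : (1 - s) / s ≤ 2 * (1 - s) := by
          rw [div_le_iff₀ hs0']
          nlinarith
        linarith
      -- x = 2K/(1-s); want -(4K) ≤ log s * x
      have hx4 : 2 * (1 - s) * x = 4 * K := by
        rw [hxdef]; field_simp; ring
      have := mul_le_mul_of_nonneg_right hlog3 hxpos.le
      calc -(4 * K) = -(2 * (1 - s) * x) := by rw [hx4]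
        _ ≤ -(-Real.log s * x) := by linarith
        _ = Real.log s * x := by ring
    -- Step E: conclude
    have hd_le : (∫ r in Set.Ioo s t, ω r) ≤ Real.exp (4 * K) * tailInt ω t := by
      have h1 : Real.exp (-(4 * K)) * (∫ r in Set.Ioo s t, ω r)
          ≤ s ^ x * (∫ r in Set.Ioo s t, ω r) :=
        mul_le_mul_of_nonneg_right hsx hD
      have h2 : Real.exp (-(4 * K)) * (∫ r in Set.Ioo s t, ω r) ≤ tailInt ω t := by
        linarith
      have h3 := mul_le_mul_of_nonneg_left h2 (Real.exp_pos (4 * K)).le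
      calc (∫ r in Set.Ioo s t, ω r)
          = Real.exp (4 * K) * (Real.exp (-(4 * K)) * (∫ r in Set.Ioo s t, ω r)) := by
            rw [← mul_assoc, ← Real.exp_add]; simp
        _ ≤ Real.exp (4 * K) * tailInt ω t := h3
    have hfin : tailInt ω s ≤ (1 + Real.exp (4 * K)) * tailInt ω t := by
      rw [hsplit_s]; linarith
    calc tailInt ω s ≤ (1 + Real.exp (4 * K)) * tailInt ω t := hfin
      _ ≤ C' * tailInt ω t := mul_le_mul_of_nonneg_right (hC'def ▸ le_max_left _ _) hTt.le
end

section
/- Let ω be a nonnegative integrable function on [0,1) belonging to D̂ (ω̂(r) ≤ C·ω̂((1+r)/2) for some C ≥ 1 and all r). Then for each β > 0 there exists a constant C' > 0 such that x^β·(ω_{[β]})_x ≤ C'·ω_x for all 0 ≤ x < ∞, where (ω_{[β]})_x = ∫_0^1 r^x (1−r)^β ω(r) dr and ω_x = ∫_0^1 r^x ω(r) dr. -/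
open MeasureTheory Set

lemma sq_le_two_pow : ∀ m : ℕ, 4 ≤ m → m^2 ≤ 2^m := by
  intro m hm
  induction m with
  | zero => omega
  | succ k ih =>
    rcases Nat.lt_or_ge k 4 with h | h
    · interval_cases k <;> omega
    · have := ih (by omega)
      have h2 : 2*k+1 ≤ k^2 := by nlinarith
      calc (k+1)^2 = k^2 + (2*k+1) := by ring
        _ ≤ 2^k + 2^k := by omega
        _ = 2^(k+1) := by ring

lemma geom_decay (A : ℝ) (hA : 1 ≤ A) :
    ∃ K : ℝ, 1 ≤ K ∧ ∀ m : ℕ, A^m * Real.exp (-(2:ℝ)^((m:ℝ)-2)) ≤ K * (1/2)^m := by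
  set M : ℕ := max 4 ⌈4 * Real.log (2*A)⌉₊ with hM
  refine ⟨(2*A)^M, one_le_pow₀ (by linarith), fun m => ?_⟩
  have hA0 : (0:ℝ) ≤ A := by linarith
  have hepos := Real.exp_pos (-(2:ℝ)^((m:ℝ)-2))
  have hexp1 : Real.exp (-(2:ℝ)^((m:ℝ)-2)) ≤ 1 := by
    calc Real.exp (-(2:ℝ)^((m:ℝ)-2)) ≤ Real.exp 0 :=
          Real.exp_le_exp.2 (neg_nonpos.mpr (le_of_lt (Real.rpow_pos_of_pos two_pos _)))
      _ = 1 := Real.exp_zero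
  have hsplit : (2*A)^m * (1/2:ℝ)^m = A^m := by
    rw [mul_pow, div_pow, one_pow]
    field_simp
  rcases le_or_gt m M with h | h
  · have h1 : A^m * Real.exp (-(2:ℝ)^((m:ℝ)-2)) ≤ A^m := by
      nlinarith [pow_nonneg hA0 m]
    have h2 : (2*A)^m ≤ (2*A)^M := pow_le_pow_right₀ (by linarith) h
    calc A^m * Real.exp (-(2:ℝ)^((m:ℝ)-2)) ≤ A^m := h1
      _ = (2*A)^m * (1/2)^m := hsplit.symm
      _ ≤ (2*A)^M * (1/2)^m := by
          have : (0:ℝ) ≤ (1/2:ℝ)^m := by positivity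
          nlinarith
  · have hm4 : 4 ≤ m := le_trans (le_max_left _ _) (le_of_lt h)
    have hlog : Real.log (2*A) ≤ (M:ℝ)/4 := by
      have h5 : 4 * Real.log (2*A) ≤ (⌈4 * Real.log (2*A)⌉₊ : ℝ) := Nat.le_ceil _
      have hMc : (⌈4 * Real.log (2*A)⌉₊:ℝ) ≤ (M:ℝ) := by
        exact_mod_cast Nat.cast_le.2 (le_max_right _ _)
      linarith
    have hsq : (m:ℝ)^2 ≤ 2^(m:ℕ) := by exact_mod_cast sq_le_two_pow m hm4
    have hMm : (M:ℝ) ≤ (m:ℝ) := by exact_mod_cast le_of_lt h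
    have key : (m:ℝ) * Real.log (2*A) ≤ (2:ℝ)^((m:ℝ)-2) := by
      have hpow : (2:ℝ)^((m:ℝ)-2) = (2:ℝ)^(m:ℕ) / 4 := by
        rw [Real.rpow_sub (by norm_num), Real.rpow_natCast]
        norm_num
      rw [hpow]
      have hm0 : (0:ℝ) ≤ (m:ℝ) := Nat.cast_nonneg m
      nlinarith [Real.log_nonneg (by linarith : (1:ℝ) ≤ 2*A)]
    have h2Am : (2*A)^m ≤ Real.exp ((2:ℝ)^((m:ℝ)-2)) := by
      have heq : (2*A)^m = Real.exp ((m:ℝ) * Real.log (2*A)) := by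
        rw [Real.exp_nat_mul, Real.exp_log (by linarith)]
      rw [heq]
      exact Real.exp_le_exp.2 key
    have h1 : A^m * Real.exp (-(2:ℝ)^((m:ℝ)-2)) ≤ (1/2)^m := by
      rw [Real.exp_neg, ← div_eq_mul_inv,
        div_le_iff₀ (Real.exp_pos _)]
      calc A^m = (1/2:ℝ)^m * (2*A)^m := by rw [mul_comm]; exact hsplit.symm
        _ ≤ (1/2:ℝ)^m * Real.exp ((2:ℝ)^((m:ℝ)-2)) :=
            mul_le_mul_of_nonneg_left h2Am (by positivity)
    calc A^m * Real.exp (-(2:ℝ)^((m:ℝ)-2)) ≤ (1/2)^m := h1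
      _ ≤ (2*A)^M * (1/2)^m := by
          have h6 : (1:ℝ) ≤ (2*A)^M := one_le_pow₀ (by linarith)
          have : (0:ℝ) ≤ (1/2:ℝ)^m := by positivity
          nlinarith

lemma one_sub_le_four_rpow (t : ℝ) (h0 : 0 ≤ t) (h : t ≤ 1/2) : (4:ℝ)^(-t) ≤ 1 - t := by
  have h4 : (4:ℝ)^(-t) = Real.exp ((1-2*t) * 0 + (2*t) * (-Real.log 2)) := by
    rw [Real.rpow_def_of_pos (by norm_num)]
    congr 1
    have : Real.log 4 = 2 * Real.log 2 := by
      rw [show (4:ℝ) = 2^2 by norm_num, Real.log_pow]; push_cast; ring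
    rw [this]; ring
  rw [h4]
  have hc := convexOn_exp.2 (mem_univ (0:ℝ)) (mem_univ (-Real.log 2))
    (by linarith : (0:ℝ) ≤ 1 - 2*t) (by linarith : (0:ℝ) ≤ 2*t) (by ring)
  simp only [smul_eq_mul] at hc
  calc Real.exp ((1-2*t) * 0 + (2*t) * (-Real.log 2))
      ≤ (1-2*t) * Real.exp 0 + (2*t) * Real.exp (-Real.log 2) := hc
    _ = 1 - t := by
        rw [Real.exp_zero, Real.exp_neg, Real.exp_log (by norm_num)]; ring

lemma sum_halves (N : ℕ) : ∑ n ∈ Finset.range N, (1/2:ℝ)^(N-n) ≤ 1 := by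
  have hre := Finset.sum_range_reflect (fun j => (1/2:ℝ)^(j+1)) N
  have heq : ∑ n ∈ Finset.range N, (1/2:ℝ)^(N-n)
      = ∑ n ∈ Finset.range N, (1/2:ℝ)^(n+1) := by
    rw [← hre]
    apply Finset.sum_congr rfl
    intro j hj
    have hjN : j < N := Finset.mem_range.1 hj
    congr 1
    omega
  rw [heq]
  have h2 : ∑ n ∈ Finset.range N, (1/2:ℝ)^(n+1)
      = (1/2) * ∑ n ∈ Finset.range N, (1/2:ℝ)^n := by
    rw [Finset.mul_sum]
    apply Finset.sum_congr rfl
    intro j _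
    ring
  rw [h2]
  have := sum_geometric_two_le N
  linarith

lemma term_bound (β C x : ℝ) (hβ : 0 < β) (hC : 1 ≤ C) (N n : ℕ) (hn : n < N)
    (hxge : (2:ℝ)^((N:ℝ)-1) ≤ x) (hxle : x ≤ (2:ℝ)^(N:ℝ)) (hx0 : 0 ≤ x) :
    x^β * ((1 - (1/2:ℝ)^(n+1))^x * ((1/2:ℝ)^n)^β * C^(N-n))
      ≤ ((2:ℝ)^β*C)^(N-n) * Real.exp (-(2:ℝ)^(((N-n:ℕ):ℝ)-2)) := by
  have hC0 : (0:ℝ) ≤ C := by linarith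
  have hmcast : ((N-n:ℕ):ℝ) = (N:ℝ) - (n:ℝ) := by
    rw [Nat.cast_sub hn.le]
  have ht0 : (0:ℝ) ≤ (1/2:ℝ)^(n+1) := by positivity
  have ht1 : (1/2:ℝ)^(n+1) ≤ 1 := by
    apply pow_le_one₀ <;> norm_num
  have hhalf : ∀ k : ℕ, (1/2:ℝ)^k = (2:ℝ)^(-(k:ℝ)) := by
    intro k
    rw [Real.rpow_neg (by norm_num), Real.rpow_natCast, one_div, inv_pow]
  have h1 : x^β * ((1/2:ℝ)^n)^β ≤ ((2:ℝ)^β)^(N-n) := by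
    have hxb : x^β ≤ ((2:ℝ)^(N:ℝ))^β := Real.rpow_le_rpow hx0 hxle hβ.le
    have hcomb : x^β * ((1/2:ℝ)^n)^β ≤ ((2:ℝ)^(N:ℝ))^β * ((2:ℝ)^(-(n:ℝ)))^β := by
      rw [← hhalf]
      exact mul_le_mul_of_nonneg_right hxb (Real.rpow_nonneg (by positivity) β)
    refine le_trans hcomb (le_of_eq ?_)
    rw [← Real.rpow_natCast ((2:ℝ)^β) (N-n), ← Real.rpow_mul (by norm_num : (0:ℝ) ≤ 2),
      ← Real.rpow_mul (by norm_num : (0:ℝ) ≤ 2), ← Real.rpow_add (by norm_num : (0:ℝ) < 2),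
      hmcast, ← Real.rpow_mul (by norm_num : (0:ℝ) ≤ 2)]
    congr 1
    ring
  have h3 : (1 - (1/2:ℝ)^(n+1))^x ≤ Real.exp (-(2:ℝ)^(((N-n:ℕ):ℝ)-2)) := by
    have e1 : (1 - (1/2:ℝ)^(n+1))^x ≤ (Real.exp (-(1/2:ℝ)^(n+1)))^x := by
      apply Real.rpow_le_rpow (by linarith) _ hx0
      have := Real.add_one_le_exp (-(1/2:ℝ)^(n+1))
      linarith
    have e2 : (Real.exp (-(1/2:ℝ)^(n+1)))^x = Real.exp (-(1/2:ℝ)^(n+1) * x) :=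
      (Real.exp_mul _ _).symm
    have e3 : Real.exp (-(1/2:ℝ)^(n+1) * x) ≤ Real.exp (-(2:ℝ)^(((N-n:ℕ):ℝ)-2)) := by
      apply Real.exp_le_exp.2
      have hh : ((1/2:ℝ)^(n+1)) * (2:ℝ)^((N:ℝ)-1) = (2:ℝ)^(((N-n:ℕ):ℝ)-2) := by
        rw [hhalf (n+1), ← Real.rpow_add (by norm_num : (0:ℝ) < 2), hmcast]
        congr 1
        push_cast
        ring
      have : (2:ℝ)^(((N-n:ℕ):ℝ)-2) ≤ ((1/2:ℝ)^(n+1)) * x := by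
        rw [← hh]
        exact mul_le_mul_of_nonneg_left hxge ht0
      linarith
    calc (1 - (1/2:ℝ)^(n+1))^x ≤ (Real.exp (-(1/2:ℝ)^(n+1)))^x := e1
      _ = Real.exp (-(1/2:ℝ)^(n+1) * x) := e2
      _ ≤ Real.exp (-(2:ℝ)^(((N-n:ℕ):ℝ)-2)) := e3
  have hf2 : (0:ℝ) ≤ ((1/2:ℝ)^n)^β := Real.rpow_nonneg (by positivity) β
  have hf3 : (0:ℝ) ≤ (1 - (1/2:ℝ)^(n+1))^x := Real.rpow_nonneg (by linarith) x
  have hf4 : (0:ℝ) ≤ C^(N-n) := pow_nonneg hC0 _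
  calc x^β * ((1 - (1/2:ℝ)^(n+1))^x * ((1/2:ℝ)^n)^β * C^(N-n))
      = (x^β * ((1/2:ℝ)^n)^β) * ((1 - (1/2:ℝ)^(n+1))^x * C^(N-n)) := by ring
    _ ≤ ((2:ℝ)^β)^(N-n) * (Real.exp (-(2:ℝ)^(((N-n:ℕ):ℝ)-2)) * C^(N-n)) := by
        apply mul_le_mul h1 (mul_le_mul_of_nonneg_right h3 hf4)
          (mul_nonneg hf3 hf4) (by positivity)
    _ = ((2:ℝ)^β*C)^(N-n) * Real.exp (-(2:ℝ)^(((N-n:ℕ):ℝ)-2)) := by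
        rw [mul_pow]
        ring

lemma nonneg_restrict {f : ℝ → ℝ} {s : Set ℝ} (hs : MeasurableSet s)
    (h : ∀ r ∈ s, 0 ≤ f r) : 0 ≤ᵐ[MeasureTheory.volume.restrict s] f := by
  filter_upwards [ae_restrict_mem hs] with r hr
  simpa using h r hr

/-- If `ω ∈ D̂`, then for each `β > 0` one has `x^β (ω_[β])_x ≤ C' ω_x` for all `x ≥ 0`. -/
theorem Dhat_implies_moment_condition (ω : ℝ → ℝ)
    (hnn : ∀ r ∈ Set.Ico (0:ℝ) 1, 0 ≤ ω r)
    (hint : MeasureTheory.IntegrableOn ω (Set.Ico 0 1))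
    (C : ℝ) (hC : 1 ≤ C)
    (hDhat : ∀ r ∈ Set.Ico (0:ℝ) 1, tailInt ω r ≤ C * tailInt ω ((1 + r) / 2)) :
    ∀ β : ℝ, 0 < β → ∃ C' > (0:ℝ), ∀ x : ℝ, 0 ≤ x →
      x ^ β * (∫ r in Set.Ioo (0:ℝ) 1, r ^ x * (1 - r) ^ β * ω r) ≤ C' * mom ω x := by
  intro β hβ
  have hC0 : (0:ℝ) < C := lt_of_lt_of_le one_pos hC
  have h2β : (1:ℝ) ≤ (2:ℝ)^β := by
    calc (1:ℝ) = (2:ℝ)^(0:ℝ) := (Real.rpow_zero 2).symm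
      _ ≤ (2:ℝ)^β := Real.rpow_le_rpow_of_exponent_le (by norm_num) hβ.le
  obtain ⟨K, hK1, hKbd⟩ := geom_decay ((2:ℝ)^β * C) (by nlinarith)
  refine ⟨1 + 4*K, by linarith, ?_⟩
  intro x hx
  set F : ℝ → ℝ := fun r => r ^ x * (1 - r) ^ β * ω r with hFdef
  set G : ℝ → ℝ := fun r => r ^ x * ω r with hGdef
  have hmom_eq : mom ω x = ∫ r in Ioo (0:ℝ) 1, G r := rfl
  have hFnn : ∀ r ∈ Ico (0:ℝ) 1, 0 ≤ F r := fun r hr =>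
    mul_nonneg (mul_nonneg (Real.rpow_nonneg hr.1 x)
      (Real.rpow_nonneg (by linarith [hr.2]) β)) (hnn r hr)
  have hGnn : ∀ r ∈ Ico (0:ℝ) 1, 0 ≤ G r := fun r hr =>
    mul_nonneg (Real.rpow_nonneg hr.1 x) (hnn r hr)
  -- measurability of the multipliers
  have hm1 : Measurable fun r : ℝ => r ^ x := (Real.continuous_rpow_const hx).measurable
  have hm2 : Measurable fun r : ℝ => (1 - r) ^ β :=
    ((Real.continuous_rpow_const hβ.le).comp (continuous_const.sub continuous_id)).measurable
  -- integrability
  have hFint : IntegrableOn F (Ico 0 1) := by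
    apply Integrable.mono' hint.abs
      (((hm1.mul hm2).aestronglyMeasurable).mul hint.aestronglyMeasurable)
    filter_upwards [ae_restrict_mem measurableSet_Ico] with r hr
    have h0 : (0:ℝ) ≤ r := hr.1
    have h1 : r < 1 := hr.2
    have e1 : r ^ x ≤ 1 := Real.rpow_le_one h0 h1.le hx
    have e2 : (1-r) ^ β ≤ 1 := Real.rpow_le_one (by linarith) (by linarith) hβ.le
    have e3 : 0 ≤ r ^ x := Real.rpow_nonneg h0 x
    have e4 : 0 ≤ (1-r) ^ β := Real.rpow_nonneg (by linarith) β
    have e5 : 0 ≤ ω r := hnn r hr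
    show ‖r ^ x * (1 - r) ^ β * ω r‖ ≤ |ω r|
    rw [Real.norm_eq_abs, abs_of_nonneg (by positivity : (0:ℝ) ≤ r ^ x * (1-r)^β * ω r),
      abs_of_nonneg e5]
    nlinarith [mul_le_mul e1 e2 e4 zero_le_one, mul_nonneg e3 e4]
  have hGint : IntegrableOn G (Ico 0 1) := by
    apply Integrable.mono' hint.abs
      ((hm1.aestronglyMeasurable).mul hint.aestronglyMeasurable)
    filter_upwards [ae_restrict_mem measurableSet_Ico] with r hr
    have h0 : (0:ℝ) ≤ r := hr.1
    have e1 : r ^ x ≤ 1 := Real.rpow_le_one h0 hr.2.le hx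
    have e3 : 0 ≤ r ^ x := Real.rpow_nonneg h0 x
    have e5 : 0 ≤ ω r := hnn r hr
    show ‖r ^ x * ω r‖ ≤ |ω r|
    rw [Real.norm_eq_abs, abs_of_nonneg (by positivity : (0:ℝ) ≤ r ^ x * ω r),
      abs_of_nonneg e5]
    nlinarith
  have hmomnn : 0 ≤ mom ω x := by
    rw [hmom_eq]
    exact setIntegral_nonneg measurableSet_Ioo (fun r hr => hGnn r ⟨hr.1.le, hr.2⟩)
  have hxb0 : (0:ℝ) ≤ x ^ β := Real.rpow_nonneg hx β
  have hFIoo : IntegrableOn F (Ioo 0 1) := hFint.mono_set Ioo_subset_Ico_self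
  have hGIoo : IntegrableOn G (Ioo 0 1) := hGint.mono_set Ioo_subset_Ico_self
  have hFIoo_nn : 0 ≤ᵐ[volume.restrict (Ioo (0:ℝ) 1)] F :=
    nonneg_restrict measurableSet_Ioo (fun r hr => hFnn r ⟨hr.1.le, hr.2⟩)
  have hGIoo_nn : 0 ≤ᵐ[volume.restrict (Ioo (0:ℝ) 1)] G :=
    nonneg_restrict measurableSet_Ioo (fun r hr => hGnn r ⟨hr.1.le, hr.2⟩)
  rcases le_or_gt x 1 with hx1 | hx1
  · -- trivial case x ≤ 1
    have hFG : (∫ r in Ioo (0:ℝ) 1, F r) ≤ mom ω x := by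
      rw [hmom_eq]
      apply setIntegral_mono_on hFIoo hGIoo measurableSet_Ioo
      intro r hr
      have h0 : (0:ℝ) < r := hr.1
      have h1 : r < 1 := hr.2
      have e2 : (1-r) ^ β ≤ 1 := Real.rpow_le_one (by linarith) (by linarith) hβ.le
      have e3 : 0 ≤ r ^ x := Real.rpow_nonneg h0.le x
      have e4 : 0 ≤ (1-r) ^ β := Real.rpow_nonneg (by linarith) β
      have e5 : 0 ≤ ω r := hnn r ⟨h0.le, h1⟩
      show r ^ x * (1 - r) ^ β * ω r ≤ r ^ x * ω r
      nlinarith [mul_nonneg e3 e5, mul_nonneg (mul_nonneg e3 e4) e5,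
        mul_le_mul_of_nonneg_right e2 (mul_nonneg e3 e5)]
    have hxβ1 : x ^ β ≤ 1 := Real.rpow_le_one hx hx1 hβ.le
    have hFpos : 0 ≤ ∫ r in Ioo (0:ℝ) 1, F r :=
      setIntegral_nonneg measurableSet_Ioo (fun r hr => hFnn r ⟨hr.1.le, hr.2⟩)
    nlinarith
  · -- main case x > 1
    set N := ⌈Real.logb 2 x⌉₊ with hNdef
    have hlogpos : 0 < Real.logb 2 x := Real.logb_pos (by norm_num) hx1
    have hN1 : 1 ≤ N := Nat.ceil_pos.2 hlogpos
    have hx0' : (0:ℝ) < x := by linarith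
    have hxle : x ≤ (2:ℝ)^(N:ℝ) := by
      calc x = (2:ℝ)^(Real.logb 2 x) :=
            (Real.rpow_logb (by norm_num) (by norm_num) hx0').symm
        _ ≤ (2:ℝ)^(N:ℝ) :=
            Real.rpow_le_rpow_of_exponent_le (by norm_num) (Nat.le_ceil _)
    have hxge : (2:ℝ)^((N:ℝ)-1) ≤ x := by
      have h1 : (N:ℝ) < Real.logb 2 x + 1 := by
        exact_mod_cast Nat.ceil_lt_add_one hlogpos.le
      calc (2:ℝ)^((N:ℝ)-1) ≤ (2:ℝ)^(Real.logb 2 x) :=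
            Real.rpow_le_rpow_of_exponent_le (by norm_num) (by linarith)
        _ = x := Real.rpow_logb (by norm_num) (by norm_num) hx0'
    set a : ℕ → ℝ := fun n => 1 - (1/2:ℝ)^n with hadef
    have ha0 : ∀ n, 0 ≤ a n := by
      intro n
      have : (1/2:ℝ)^n ≤ 1 := pow_le_one₀ (by norm_num) (by norm_num)
      simp only [hadef]
      linarith
    have ha1 : ∀ n, a n < 1 := by
      intro n
      have : (0:ℝ) < (1/2:ℝ)^n := by positivity
      simp only [hadef]
      linarith
    have hamono : ∀ n, a n ≤ a (n+1) := by
      intro n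
      have : (1/2:ℝ)^(n+1) ≤ (1/2:ℝ)^n :=
        pow_le_pow_of_le_one (by norm_num) (by norm_num) (by omega)
      simp only [hadef]
      linarith
    have hasucc : ∀ n, a (n+1) = (1 + a n)/2 := by
      intro n
      simp only [hadef, pow_succ]
      ring
    have haIco : ∀ n, a n ∈ Ico (0:ℝ) 1 := fun n => ⟨ha0 n, ha1 n⟩
    have htail_eq : ∀ n, tailInt ω (a n) = ∫ s in Ioo (a n) 1, ω s := fun n => rfl
    have hωtail : ∀ n, IntegrableOn ω (Ioo (a n) 1) := by
      intro n
      apply hint.mono_set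
      intro r hr
      exact ⟨le_trans (ha0 n) hr.1.le, hr.2⟩
    have hωtail_nn : ∀ n, 0 ≤ᵐ[volume.restrict (Ioo (a n) 1)] ω := fun n =>
      nonneg_restrict measurableSet_Ioo (fun r hr => hnn r ⟨le_trans (ha0 n) hr.1.le, hr.2⟩)
    have hWnn : ∀ n, 0 ≤ tailInt ω (a n) := by
      intro n
      rw [htail_eq]
      exact setIntegral_nonneg measurableSet_Ioo
        (fun r hr => hnn r ⟨le_trans (ha0 n) hr.1.le, hr.2⟩)
    have hDiter : ∀ k n, tailInt ω (a n) ≤ C^k * tailInt ω (a (n+k)) := by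
      intro k
      induction k with
      | zero => intro n; simp
      | succ k ih =>
        intro n
        have step : tailInt ω (a (n+k)) ≤ C * tailInt ω (a (n+k+1)) := by
          have := hDhat (a (n+k)) (haIco _)
          rwa [← hasucc] at this
        calc tailInt ω (a n) ≤ C^k * tailInt ω (a (n+k)) := ih n
          _ ≤ C^k * (C * tailInt ω (a (n+k+1))) :=
              mul_le_mul_of_nonneg_left step (pow_nonneg hC0.le k)
          _ = C^(k+1) * tailInt ω (a (n+k+1)) := by ring
    -- bound for each dyadic piece
    have hpiece : ∀ n : ℕ, (∫ r in Ico (a n) (a (n+1)), F r)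
        ≤ (a (n+1))^x * ((1/2:ℝ)^n)^β * tailInt ω (a n) := by
      intro n
      have hsub1 : Ico (a n) (a (n+1)) ⊆ Ico (0:ℝ) 1 :=
        fun r hr => ⟨le_trans (ha0 n) hr.1, lt_trans hr.2 (ha1 (n+1))⟩
      have hc1 : (0:ℝ) ≤ (a (n+1))^x * ((1/2:ℝ)^n)^β :=
        mul_nonneg (Real.rpow_nonneg (ha0 _) x) (Real.rpow_nonneg (by positivity) β)
      have step1 : (∫ r in Ico (a n) (a (n+1)), F r)
          ≤ ∫ r in Ico (a n) (a (n+1)), ((a (n+1))^x * ((1/2:ℝ)^n)^β) * ω r := by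
        apply setIntegral_mono_on (hFint.mono_set hsub1)
          ((hint.mono_set hsub1).const_mul _) measurableSet_Ico
        intro r hr
        have h0 : (0:ℝ) ≤ r := le_trans (ha0 n) hr.1
        have h1 : r < 1 := lt_trans hr.2 (ha1 (n+1))
        have e1 : r ^ x ≤ (a (n+1))^x := Real.rpow_le_rpow h0 hr.2.le hx
        have e1r : 1 - r ≤ (1/2:ℝ)^n := by
          have : a n ≤ r := hr.1
          simp only [hadef] at this
          linarith
        have e2 : (1-r) ^ β ≤ ((1/2:ℝ)^n)^β :=
          Real.rpow_le_rpow (by linarith) e1r hβ.le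
        have e3 : 0 ≤ r ^ x := Real.rpow_nonneg h0 x
        have e4 : 0 ≤ (1-r) ^ β := Real.rpow_nonneg (by linarith) β
        have e5 : 0 ≤ ω r := hnn r ⟨h0, h1⟩
        show r ^ x * (1 - r) ^ β * ω r ≤ ((a (n+1))^x * ((1/2:ℝ)^n)^β) * ω r
        apply mul_le_mul_of_nonneg_right _ e5
        exact mul_le_mul e1 e2 e4 (Real.rpow_nonneg (ha0 _) x)
      have step2 : (∫ r in Ico (a n) (a (n+1)), ((a (n+1))^x * ((1/2:ℝ)^n)^β) * ω r)
          = ((a (n+1))^x * ((1/2:ℝ)^n)^β) * ∫ r in Ico (a n) (a (n+1)), ω r :=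
        integral_const_mul _ _
      have step3 : (∫ r in Ico (a n) (a (n+1)), ω r) ≤ tailInt ω (a n) := by
        rw [htail_eq, MeasureTheory.integral_Ico_eq_integral_Ioo]
        apply setIntegral_mono_set (hωtail n) (hωtail_nn n)
        exact HasSubset.Subset.eventuallyLE (Ioo_subset_Ioo_right (ha1 (n+1)).le)
      calc (∫ r in Ico (a n) (a (n+1)), F r)
          ≤ ((a (n+1))^x * ((1/2:ℝ)^n)^β) * ∫ r in Ico (a n) (a (n+1)), ω r := by
            rw [← step2]; exact step1
        _ ≤ ((a (n+1))^x * ((1/2:ℝ)^n)^β) * tailInt ω (a n) :=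
            mul_le_mul_of_nonneg_left step3 hc1
    -- dyadic decomposition
    have hdecomp : ∀ M : ℕ, (∫ r in Ioo (0:ℝ) (a M), F r)
        ≤ ∑ n ∈ Finset.range M, ((a (n+1))^x * ((1/2:ℝ)^n)^β * tailInt ω (a n)) := by
      intro M
      induction M with
      | zero =>
        have : a 0 = 0 := by simp [hadef]
        rw [this]
        simp
      | succ M ih =>
        have hsubset : Ioo (0:ℝ) (a (M+1)) ⊆ Ioo 0 (a M) ∪ Ico (a M) (a (M+1)) := by
          intro r hr
          rcases lt_or_ge r (a M) with h | h
          · exact Or.inl ⟨hr.1, h⟩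
          · exact Or.inr ⟨h, hr.2⟩
        have hdisj : Disjoint (Ioo (0:ℝ) (a M)) (Ico (a M) (a (M+1))) := by
          apply Set.disjoint_left.2
          intro r hr hr2
          exact absurd hr.2 (not_lt.2 hr2.1)
        have hs1 : Ioo (0:ℝ) (a M) ⊆ Ico 0 1 :=
          fun r hr => ⟨hr.1.le, lt_of_lt_of_le hr.2 (ha1 M).le⟩
        have hs2 : Ico (a M) (a (M+1)) ⊆ Ico (0:ℝ) 1 :=
          fun r hr => ⟨le_trans (ha0 M) hr.1, lt_trans hr.2 (ha1 (M+1))⟩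
        have hunion_int : IntegrableOn F (Ioo 0 (a M) ∪ Ico (a M) (a (M+1))) :=
          (hFint.mono_set hs1).union (hFint.mono_set hs2)
        have hae : 0 ≤ᵐ[volume.restrict (Ioo (0:ℝ) (a M) ∪ Ico (a M) (a (M+1)))] F := by
          apply nonneg_restrict ((measurableSet_Ioo).union measurableSet_Ico)
          intro r hr
          rcases hr with h | h
          · exact hFnn r (hs1 h)
          · exact hFnn r (hs2 h)
        calc (∫ r in Ioo (0:ℝ) (a (M+1)), F r)
            ≤ ∫ r in Ioo (0:ℝ) (a M) ∪ Ico (a M) (a (M+1)), F r :=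
              setIntegral_mono_set hunion_int hae (HasSubset.Subset.eventuallyLE hsubset)
          _ = (∫ r in Ioo (0:ℝ) (a M), F r) + ∫ r in Ico (a M) (a (M+1)), F r :=
              setIntegral_union hdisj measurableSet_Ico
                (hFint.mono_set hs1) (hFint.mono_set hs2)
          _ ≤ ∑ n ∈ Finset.range (M+1),
                ((a (n+1))^x * ((1/2:ℝ)^n)^β * tailInt ω (a n)) := by
              rw [Finset.sum_range_succ]
              exact add_le_add ih (hpiece M)
    -- split the full integral
    have haNpos : (0:ℝ) < a N := by
      have h1 : (1/2:ℝ)^N ≤ (1/2:ℝ)^1 :=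
        pow_le_pow_of_le_one (by norm_num) (by norm_num) hN1
      simp only [hadef]
      norm_num at h1 ⊢
      linarith
    have hsplit : (∫ r in Ioo (0:ℝ) 1, F r)
        ≤ (∫ r in Ioo (0:ℝ) (a N), F r) + ∫ r in Ico (a N) 1, F r := by
      have hsubset : Ioo (0:ℝ) 1 ⊆ Ioo 0 (a N) ∪ Ico (a N) 1 := by
        intro r hr
        rcases lt_or_ge r (a N) with h | h
        · exact Or.inl ⟨hr.1, h⟩
        · exact Or.inr ⟨h, hr.2⟩
      have hdisj : Disjoint (Ioo (0:ℝ) (a N)) (Ico (a N) 1) := by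
        apply Set.disjoint_left.2
        intro r hr hr2
        exact absurd hr.2 (not_lt.2 hr2.1)
      have hs1 : Ioo (0:ℝ) (a N) ⊆ Ico 0 1 :=
        fun r hr => ⟨hr.1.le, lt_of_lt_of_le hr.2 (ha1 N).le⟩
      have hs2 : Ico (a N) 1 ⊆ Ico (0:ℝ) 1 :=
        fun r hr => ⟨le_trans (ha0 N) hr.1, hr.2⟩
      have hunion_int : IntegrableOn F (Ioo 0 (a N) ∪ Ico (a N) 1) :=
        (hFint.mono_set hs1).union (hFint.mono_set hs2)
      have hae : 0 ≤ᵐ[volume.restrict (Ioo (0:ℝ) (a N) ∪ Ico (a N) 1)] F := by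
        apply nonneg_restrict ((measurableSet_Ioo).union measurableSet_Ico)
        intro r hr
        rcases hr with h | h
        · exact hFnn r (hs1 h)
        · exact hFnn r (hs2 h)
      calc (∫ r in Ioo (0:ℝ) 1, F r)
          ≤ ∫ r in Ioo (0:ℝ) (a N) ∪ Ico (a N) 1, F r :=
            setIntegral_mono_set hunion_int hae (HasSubset.Subset.eventuallyLE hsubset)
        _ = (∫ r in Ioo (0:ℝ) (a N), F r) + ∫ r in Ico (a N) 1, F r :=
            setIntegral_union hdisj measurableSet_Ico
              (hFint.mono_set hs1) (hFint.mono_set hs2)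
    -- tail bound
    have h2Npos : (0:ℝ) < (2:ℝ)^(N:ℝ) := Real.rpow_pos_of_pos (by norm_num) _
    have hhalfN : (1/2:ℝ)^N = ((2:ℝ)^(N:ℝ))⁻¹ := by
      rw [Real.rpow_natCast, one_div, inv_pow]
    have htail : x ^ β * (∫ r in Ico (a N) 1, F r) ≤ mom ω x := by
      have hs2 : Ico (a N) 1 ⊆ Ioo (0:ℝ) 1 :=
        fun r hr => ⟨lt_of_lt_of_le haNpos hr.1, hr.2⟩
      have hs2' : Ico (a N) 1 ⊆ Ico (0:ℝ) 1 :=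
        fun r hr => ⟨le_trans (ha0 N) hr.1, hr.2⟩
      have step1 : (∫ r in Ico (a N) 1, F r)
          ≤ ∫ r in Ico (a N) 1, ((1/2:ℝ)^N)^β * G r := by
        apply setIntegral_mono_on (hFint.mono_set hs2')
          ((hGint.mono_set hs2').const_mul _) measurableSet_Ico
        intro r hr
        have h0 : (0:ℝ) ≤ r := le_trans (ha0 N) hr.1
        have h1 : r < 1 := hr.2
        have e1r : 1 - r ≤ (1/2:ℝ)^N := by
          have : a N ≤ r := hr.1
          simp only [hadef] at this
          linarith
        have e2 : (1-r) ^ β ≤ ((1/2:ℝ)^N)^β :=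
          Real.rpow_le_rpow (by linarith) e1r hβ.le
        have e3 : 0 ≤ r ^ x := Real.rpow_nonneg h0 x
        have e5 : 0 ≤ ω r := hnn r ⟨h0, h1⟩
        show r ^ x * (1 - r) ^ β * ω r ≤ ((1/2:ℝ)^N)^β * (r ^ x * ω r)
        calc r ^ x * (1 - r) ^ β * ω r = (1-r)^β * (r ^ x * ω r) := by ring
          _ ≤ ((1/2:ℝ)^N)^β * (r ^ x * ω r) :=
              mul_le_mul_of_nonneg_right e2 (mul_nonneg e3 e5)
      have step2 : (∫ r in Ico (a N) 1, ((1/2:ℝ)^N)^β * G r)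
          = ((1/2:ℝ)^N)^β * ∫ r in Ico (a N) 1, G r := integral_const_mul _ _
      have step3 : (∫ r in Ico (a N) 1, G r) ≤ mom ω x := by
        rw [hmom_eq]
        exact setIntegral_mono_set hGIoo hGIoo_nn (HasSubset.Subset.eventuallyLE hs2)
      have hxpow : x ^ β * ((1/2:ℝ)^N)^β ≤ 1 := by
        rw [← Real.mul_rpow hx (by positivity)]
        apply Real.rpow_le_one (by positivity) _ hβ.le
        rw [hhalfN]
        calc x * ((2:ℝ)^(N:ℝ))⁻¹ ≤ (2:ℝ)^(N:ℝ) * ((2:ℝ)^(N:ℝ))⁻¹ :=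
              mul_le_mul_of_nonneg_right hxle (inv_nonneg.2 h2Npos.le)
          _ = 1 := mul_inv_cancel₀ (ne_of_gt h2Npos)
      have hGInn : 0 ≤ ∫ r in Ico (a N) 1, G r :=
        setIntegral_nonneg measurableSet_Ico (fun r hr => hGnn r (hs2' hr))
      have hcb : (0:ℝ) ≤ ((1/2:ℝ)^N)^β := Real.rpow_nonneg (by positivity) β
      calc x ^ β * (∫ r in Ico (a N) 1, F r)
          ≤ x ^ β * (((1/2:ℝ)^N)^β * ∫ r in Ico (a N) 1, G r) := by
            apply mul_le_mul_of_nonneg_left _ hxb0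
            rw [← step2]; exact step1
        _ = (x ^ β * ((1/2:ℝ)^N)^β) * ∫ r in Ico (a N) 1, G r := by ring
        _ ≤ 1 * ∫ r in Ico (a N) 1, G r :=
            mul_le_mul_of_nonneg_right hxpow hGInn
        _ = ∫ r in Ico (a N) 1, G r := one_mul _
        _ ≤ mom ω x := step3
    -- lower bound on the moment
    have hlow : tailInt ω (a N) ≤ 4 * mom ω x := by
      have haNx : (1/4:ℝ) ≤ (a N)^x := by
        have ht0 : (0:ℝ) ≤ (1/2:ℝ)^N := by positivity
        have ht12 : (1/2:ℝ)^N ≤ 1/2 := by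
          have h7 : (1/2:ℝ)^N ≤ (1/2:ℝ)^1 :=
            pow_le_pow_of_le_one (by norm_num) (by norm_num) hN1
          simpa using h7
        have h4t : (4:ℝ)^(-(1/2:ℝ)^N) ≤ 1 - (1/2:ℝ)^N :=
          one_sub_le_four_rpow _ ht0 ht12
        have e1 : ((4:ℝ)^(-(1/2:ℝ)^N))^x ≤ (1-(1/2:ℝ)^N)^x :=
          Real.rpow_le_rpow (Real.rpow_nonneg (by norm_num) _) h4t hx
        have e2 : ((4:ℝ)^(-(1/2:ℝ)^N))^x = (4:ℝ)^(-((1/2:ℝ)^N*x)) := by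
          rw [← Real.rpow_mul (by norm_num : (0:ℝ) ≤ 4)]
          congr 1
          ring
        have htx1 : (1/2:ℝ)^N * x ≤ 1 := by
          rw [hhalfN]
          calc ((2:ℝ)^(N:ℝ))⁻¹ * x ≤ ((2:ℝ)^(N:ℝ))⁻¹ * (2:ℝ)^(N:ℝ) :=
                mul_le_mul_of_nonneg_left hxle (inv_nonneg.2 h2Npos.le)
            _ = 1 := inv_mul_cancel₀ (ne_of_gt h2Npos)
        have e3 : (4:ℝ)^(-(1:ℝ)) ≤ (4:ℝ)^(-((1/2:ℝ)^N*x)) :=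
          Real.rpow_le_rpow_of_exponent_le (by norm_num) (by linarith)
        have e4 : (4:ℝ)^(-(1:ℝ)) = 1/4 := by
          rw [Real.rpow_neg_one]
          norm_num
        have haN : a N = 1 - (1/2:ℝ)^N := rfl
        rw [haN]
        calc (1/4:ℝ) = (4:ℝ)^(-(1:ℝ)) := e4.symm
          _ ≤ (4:ℝ)^(-((1/2:ℝ)^N*x)) := e3
          _ = ((4:ℝ)^(-(1/2:ℝ)^N))^x := e2.symm
          _ ≤ (1-(1/2:ℝ)^N)^x := e1
      have step : (a N)^x * tailInt ω (a N) ≤ mom ω x := by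
        have e5 : (a N)^x * tailInt ω (a N) = ∫ r in Ioo (a N) 1, (a N)^x * ω r := by
          rw [htail_eq]
          exact (integral_const_mul _ _).symm
        rw [e5]
        have stepa : (∫ r in Ioo (a N) 1, (a N)^x * ω r) ≤ ∫ r in Ioo (a N) 1, G r := by
          apply setIntegral_mono_on ((hωtail N).const_mul _)
            (hGint.mono_set (fun r hr => ⟨le_trans (ha0 N) hr.1.le, hr.2⟩))
            measurableSet_Ioo
          intro r hr
          have h0 : (0:ℝ) ≤ r := le_trans (ha0 N) hr.1.le
          have e1 : (a N) ^ x ≤ r ^ x := Real.rpow_le_rpow (ha0 N) hr.1.le hx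
          have e5' : 0 ≤ ω r := hnn r ⟨h0, hr.2⟩
          exact mul_le_mul_of_nonneg_right e1 e5'
        have stepb : (∫ r in Ioo (a N) 1, G r) ≤ mom ω x := by
          rw [hmom_eq]
          apply setIntegral_mono_set hGIoo hGIoo_nn
          exact HasSubset.Subset.eventuallyLE
            (fun r hr => ⟨lt_of_lt_of_le haNpos hr.1.le, hr.2⟩)
        linarith
      nlinarith [hWnn N]
    -- sum bound
    have hsum : x ^ β * (∫ r in Ioo (0:ℝ) (a N), F r) ≤ 4 * K * mom ω x := by
      have h1 := hdecomp N
      have h2 : x ^ β * (∫ r in Ioo (0:ℝ) (a N), F r)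
          ≤ ∑ n ∈ Finset.range N,
              x ^ β * ((a (n+1))^x * ((1/2:ℝ)^n)^β * tailInt ω (a n)) := by
        rw [← Finset.mul_sum]
        exact mul_le_mul_of_nonneg_left h1 hxb0
      have h3 : ∑ n ∈ Finset.range N,
            x ^ β * ((a (n+1))^x * ((1/2:ℝ)^n)^β * tailInt ω (a n))
          ≤ ∑ n ∈ Finset.range N, (K * (1/2:ℝ)^(N-n)) * tailInt ω (a N) := by
        apply Finset.sum_le_sum
        intro n hn
        have hnN : n < N := Finset.mem_range.1 hn
        have t1 : tailInt ω (a n) ≤ C^(N-n) * tailInt ω (a N) := by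
          have := hDiter (N-n) n
          rwa [Nat.add_sub_cancel' hnN.le] at this
        have hcn : (0:ℝ) ≤ x ^ β * ((a (n+1))^x * ((1/2:ℝ)^n)^β) :=
          mul_nonneg hxb0 (mul_nonneg (Real.rpow_nonneg (ha0 _) x)
            (Real.rpow_nonneg (by positivity) β))
        have t2 : x ^ β * ((a (n+1))^x * ((1/2:ℝ)^n)^β * tailInt ω (a n))
            ≤ (x ^ β * ((a (n+1))^x * ((1/2:ℝ)^n)^β * C^(N-n))) * tailInt ω (a N) := by
          calc x ^ β * ((a (n+1))^x * ((1/2:ℝ)^n)^β * tailInt ω (a n))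
              = (x ^ β * ((a (n+1))^x * ((1/2:ℝ)^n)^β)) * tailInt ω (a n) := by ring
            _ ≤ (x ^ β * ((a (n+1))^x * ((1/2:ℝ)^n)^β)) * (C^(N-n) * tailInt ω (a N)) :=
                mul_le_mul_of_nonneg_left t1 hcn
            _ = (x ^ β * ((a (n+1))^x * ((1/2:ℝ)^n)^β * C^(N-n))) * tailInt ω (a N) := by
                ring
        have t3 : x ^ β * ((a (n+1))^x * ((1/2:ℝ)^n)^β * C^(N-n))
            ≤ K * (1/2:ℝ)^(N-n) := by
          have hb := term_bound β C x hβ hC N n hnN hxge hxle hx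
          have hKb := hKbd (N-n)
          have haux : a (n+1) = 1 - (1/2:ℝ)^(n+1) := rfl
          rw [haux]
          exact le_trans hb hKb
        calc x ^ β * ((a (n+1))^x * ((1/2:ℝ)^n)^β * tailInt ω (a n))
            ≤ (x ^ β * ((a (n+1))^x * ((1/2:ℝ)^n)^β * C^(N-n))) * tailInt ω (a N) := t2
          _ ≤ (K * (1/2:ℝ)^(N-n)) * tailInt ω (a N) :=
              mul_le_mul_of_nonneg_right t3 (hWnn N)
      have h4 : ∑ n ∈ Finset.range N, (K * (1/2:ℝ)^(N-n)) * tailInt ω (a N)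
          ≤ K * tailInt ω (a N) := by
        have : ∑ n ∈ Finset.range N, (K * (1/2:ℝ)^(N-n)) * tailInt ω (a N)
            = (K * tailInt ω (a N)) * ∑ n ∈ Finset.range N, (1/2:ℝ)^(N-n) := by
          rw [Finset.mul_sum]
          apply Finset.sum_congr rfl
          intro n _
          ring
        rw [this]
        have hKW : (0:ℝ) ≤ K * tailInt ω (a N) :=
          mul_nonneg (by linarith) (hWnn N)
        calc (K * tailInt ω (a N)) * ∑ n ∈ Finset.range N, (1/2:ℝ)^(N-n)
            ≤ (K * tailInt ω (a N)) * 1 :=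
              mul_le_mul_of_nonneg_left (sum_halves N) hKW
          _ = K * tailInt ω (a N) := mul_one _
      have h5 : K * tailInt ω (a N) ≤ K * (4 * mom ω x) :=
        mul_le_mul_of_nonneg_left hlow (by linarith)
      calc x ^ β * (∫ r in Ioo (0:ℝ) (a N), F r)
          ≤ ∑ n ∈ Finset.range N,
              x ^ β * ((a (n+1))^x * ((1/2:ℝ)^n)^β * tailInt ω (a n)) := h2
        _ ≤ ∑ n ∈ Finset.range N, (K * (1/2:ℝ)^(N-n)) * tailInt ω (a N) := h3
        _ ≤ K * tailInt ω (a N) := h4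
        _ ≤ K * (4 * mom ω x) := h5
        _ = 4 * K * mom ω x := by ring
    calc x ^ β * (∫ r in Ioo (0:ℝ) 1, F r)
        ≤ x ^ β * ((∫ r in Ioo (0:ℝ) (a N), F r) + ∫ r in Ico (a N) 1, F r) :=
          mul_le_mul_of_nonneg_left hsplit hxb0
      _ = x ^ β * (∫ r in Ioo (0:ℝ) (a N), F r)
            + x ^ β * (∫ r in Ico (a N) 1, F r) := by ring
      _ ≤ 4 * K * mom ω x + mom ω x := add_le_add hsum htail
      _ = (1 + 4*K) * mom ω x := by ring
end
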